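/- arXiv:hep-th/9311149 — 7 statements merged into one kernel-verified Lean document; each statement's English description precedes it below -/
import Mathlib

section
/- Let H be a Hopf algebra over ℂ and (ρ, V) a finite-dimensional irreducible representation. Suppose w ∈ V⊗V is a nonzero invariant vector for the tensor product representation and w̃ ∈ V*⊗V* is a nonzero invariant vector for the tensor product of the contragredient representations. Let φ : V* → V be φ(ζ) := (ζ⊗id_V)(w) and let ψ : V → V* be ψ(v) := (id_{V*}⊗ev_v)(w̃), where ev_v(ξ) := ξ(v). Then ψ is an isomorphism of representations from V to the contragredient representation on V*, and there exists a nonzero scalar c ∈ ℂ with φ∘ψ = c·id_V and ψ∘φ = c·id_{V*}. -/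
/-! Invariance of `w̃` under `ρ_{V*} ⊗ ρ_{V*}` says that `ψ`, seen in `Hom(V, V*)`, is fixed by
`x · f = ∑ ρ_{V*}(x₁) ∘ f ∘ ρ(S x₂)`, and coassociativity together with the antipode axiom turn
this into `ψ ∘ ρ(x) = ρ_{V*}(x) ∘ ψ`; in the same way `φ` intertwines `V*` with `V`.
By irreducibility the nonzero intertwiner `ψ` has trivial kernel, so it is bijective as
`dim V* = dim V`, and by Schur's lemma `φ ∘ ψ` is a scalar `c`, which is nonzero since `φ ≠ 0`. -/

open TensorProduct

/-- `ρ ⊗ ρ` applied to an element of `H ⊗ H`, as an endomorphism of `V ⊗ V`. -/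
noncomputable def rep2 {H V : Type*} [Ring H] [HopfAlgebra ℂ H] [AddCommGroup V] [Module ℂ V]
    (ρ : H →ₐ[ℂ] Module.End ℂ V) (a : H ⊗[ℂ] H) : Module.End ℂ (V ⊗[ℂ] V) :=
  (TensorProduct.homTensorHomMap (RingHom.id ℂ) V V V V) ((TensorProduct.map ρ.toLinearMap ρ.toLinearMap) a)

/-- The contragredient representation `x ↦ (ρ(S(x)))ᵀ` on the dual space. -/
noncomputable def dualRep {H V : Type*} [Ring H] [HopfAlgebra ℂ H] [AddCommGroup V] [Module ℂ V]
    (ρ : H →ₐ[ℂ] Module.End ℂ V) : H →ₗ[ℂ] Module.End ℂ (Module.Dual ℂ V) :=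
  (Module.Dual.transpose (R := ℂ)) ∘ₗ ρ.toLinearMap ∘ₗ (HopfAlgebra.antipode (R := ℂ))

/-- `φ(ζ) = (ζ ⊗ id)(w)` : contraction of a functional against the first factor of `w`. -/
noncomputable def phiMap {V : Type*} [AddCommGroup V] [Module ℂ V] (w : V ⊗[ℂ] V) :
    Module.Dual ℂ V →ₗ[ℂ] V :=
  (TensorProduct.lid ℂ V).toLinearMap ∘ₗ (LinearMap.applyₗ w) ∘ₗ (LinearMap.rTensorHom V)

/-- `ψ(v) = (id ⊗ ev_v)(w̃)` : contraction of a vector against the second factor of `w̃`. -/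
noncomputable def psiMap {V : Type*} [AddCommGroup V] [Module ℂ V]
    (wt : Module.Dual ℂ V ⊗[ℂ] Module.Dual ℂ V) : V →ₗ[ℂ] Module.Dual ℂ V :=
  (TensorProduct.rid ℂ (Module.Dual ℂ V)).toLinearMap ∘ₗ (LinearMap.applyₗ wt)
    ∘ₗ (LinearMap.lTensorHom (Module.Dual ℂ V)) ∘ₗ (LinearMap.applyₗ)

/-- `ρ_{V*} ⊗ ρ_{V*}` applied to an element of `H ⊗ H`, as an endomorphism of `V* ⊗ V*`. -/
noncomputable def rep2d {H V : Type*} [Ring H] [HopfAlgebra ℂ H] [AddCommGroup V] [Module ℂ V]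
    (ρ : H →ₐ[ℂ] Module.End ℂ V) (a : H ⊗[ℂ] H) :
    Module.End ℂ (Module.Dual ℂ V ⊗[ℂ] Module.Dual ℂ V) :=
  (TensorProduct.homTensorHomMap (RingHom.id ℂ) _ _ _ _)
    ((TensorProduct.map (dualRep ρ) (dualRep ρ)) a)

section Hopf

open LinearMap Coalgebra HopfAlgebra

variable {R H A B : Type*} [CommSemiring R] [Semiring H] [HopfAlgebra R H]
  [AddCommMonoid A] [Module R A] [AddCommMonoid B] [Module R B]

noncomputable def sandwich (β : H →ₗ[R] Module.End R B) (f : A →ₗ[R] B)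
    (γ : H →ₗ[R] Module.End R A) : H ⊗[R] H →ₗ[R] A →ₗ[R] B :=
  lift ((llcomp R A B B).compl₁₂ β (llcomp R A A B f ∘ₗ γ))

@[simp]
lemma sandwich_tmul (β : H →ₗ[R] Module.End R B) (f : A →ₗ[R] B) (γ : H →ₗ[R] Module.End R A)
    (a b : H) : sandwich β f γ (a ⊗ₜ b) = β a ∘ₗ f ∘ₗ γ b :=
  rfl

theorem comp_eq_comp_of_sandwich_comul_eq (α : H →ₐ[R] Module.End R A)
    (β : H →ₗ[R] Module.End R B) (f : A →ₗ[R] B)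
    (hf : ∀ x, sandwich β f (α.toLinearMap ∘ₗ antipode R) (comul (R := R) x) =
      counit (R := R) x • f)
    (x : H) : f ∘ₗ α x = β x ∘ₗ f := by
  -- `f ∘ α x = ∑ β x₁ ∘ f ∘ α (S x₂) ∘ α x₃ = ∑ β x₁ ∘ f ∘ α (S x₂ * x₃) = β x ∘ f`
  let G : (H ⊗[R] H) ⊗[R] H →ₗ[R] A →ₗ[R] B :=
    lift ((llcomp R A A B).compl₁₂ (sandwich β f (α.toLinearMap ∘ₗ antipode R))
      α.toLinearMap)
  have hG_counit : G ∘ₗ (comul (R := R)).rTensor H =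
      (llcomp R A A B f ∘ₗ α.toLinearMap) ∘ₗ TensorProduct.lid R H ∘ₗ
        (counit (R := R)).rTensor H := by
    ext a c
    simp [G, hf]
  have hG_antipode : G ∘ₗ (TensorProduct.assoc R H H H).symm =
      sandwich β f α.toLinearMap ∘ₗ (mul' R H ∘ₗ (antipode R).rTensor H).lTensor H := by
    ext a b c
    simp [G, map_mul, Module.End.mul_eq_comp]
  calc f ∘ₗ α x = G ((comul (R := R)).rTensor H (comul (R := R) x)) := by
        simp [← LinearMap.comp_apply (G), hG_counit]; rfl
    _ = sandwich β f α.toLinearMap ((mul' R H ∘ₗ (antipode R).rTensor H).lTensor H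
          ((comul (R := R)).lTensor H (comul (R := R) x))) := by
        rw [← coassoc_symm_apply]
        exact LinearMap.congr_fun hG_antipode _
    _ = sandwich β f α.toLinearMap (x ⊗ₜ 1) := by
        rw [← lTensor_comp_apply, LinearMap.comp_assoc, mul_antipode_rTensor_comul,
          lTensor_comp_apply, lTensor_counit_comul]
        simp
    _ = β x ∘ₗ f := by simp [Module.End.one_eq_id]

theorem comp_antipode_eq_comp_of_sandwich_comm_comul_eq (γ : H →ₗ[R] Module.End R A)
    (hγ_one : γ 1 = 1) (hγ_mul : ∀ a b, γ (a * b) = γ b * γ a)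
    (β : H →ₗ[R] Module.End R B) (f : A →ₗ[R] B)
    (hf : ∀ x, sandwich β f γ (TensorProduct.comm R H H (comul (R := R) x)) =
      counit (R := R) x • f)
    (x : H) : f ∘ₗ γ (antipode R x) = β x ∘ₗ f := by
  -- `f ∘ γ (S x) = ∑ β x₃ ∘ f ∘ γ x₂ ∘ γ (S x₁) = ∑ β x₃ ∘ f ∘ γ (S x₁ * x₂) = β x ∘ f`
  let G : H ⊗[R] (H ⊗[R] H) →ₗ[R] A →ₗ[R] B :=
    lift ((llcomp R A A B).compl₁₂
      (sandwich β f γ ∘ₗ (TensorProduct.comm R H H).toLinearMap) (γ ∘ₗ antipode R)).flip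
  have hG_counit : G ∘ₗ (comul (R := R)).lTensor H =
      (llcomp R A A B f ∘ₗ γ ∘ₗ antipode R) ∘ₗ TensorProduct.rid R H ∘ₗ
        (counit (R := R)).lTensor H := by
    ext a c
    simp [G, hf]
  have hG_antipode : G ∘ₗ TensorProduct.assoc R H H H =
      sandwich β f γ ∘ₗ (TensorProduct.comm R H H).toLinearMap ∘ₗ
        (mul' R H ∘ₗ (antipode R).rTensor H).rTensor H := by
    ext a b c
    simp [G, hγ_mul, Module.End.mul_eq_comp]
  calc f ∘ₗ γ (antipode R x) = G ((comul (R := R)).lTensor H (comul (R := R) x)) := by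
        simp [← LinearMap.comp_apply (G), hG_counit]; rfl
    _ = sandwich β f γ (TensorProduct.comm R H H
          ((mul' R H ∘ₗ (antipode R).rTensor H).rTensor H
            ((comul (R := R)).rTensor H (comul (R := R) x)))) := by
        rw [← coassoc_apply]
        exact LinearMap.congr_fun hG_antipode _
    _ = sandwich β f γ (TensorProduct.comm R H H (1 ⊗ₜ x)) := by
        rw [← rTensor_comp_apply, LinearMap.comp_assoc, mul_antipode_rTensor_comul,
          rTensor_comp_apply, rTensor_counit_comul]
        simp
    _ = β x ∘ₗ f := by simp [hγ_one, Module.End.one_eq_id]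

end Hopf

section Contraction

open Module

variable {V : Type*} [AddCommGroup V] [Module ℂ V]

lemma psiMap_eq_dualTensorHom (wt : Dual ℂ V ⊗[ℂ] Dual ℂ V) :
    psiMap wt = dualTensorHom ℂ V (Dual ℂ V) (TensorProduct.comm ℂ _ _ wt) := by
  induction wt using TensorProduct.induction_on with
  | zero => ext; simp [psiMap]
  | tmul η ξ => ext; simp [psiMap]
  | add s t hs ht => rw [map_add, map_add, ← hs, ← ht]; ext; simp [psiMap]

lemma phiMap_eq_dualTensorHom (w : V ⊗[ℂ] V) :
    phiMap w = dualTensorHom ℂ (Dual ℂ V) V ((Dual.eval ℂ V).rTensor V w) := by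
  induction w using TensorProduct.induction_on with
  | zero => ext; simp [phiMap]
  | tmul u v => ext; simp [phiMap]
  | add s t hs ht => rw [map_add, map_add, ← hs, ← ht]; ext; simp [phiMap]

lemma psiMap_map_dualMap (g : Module.End ℂ (Dual ℂ V)) (k : Module.End ℂ V)
    (wt : Dual ℂ V ⊗[ℂ] Dual ℂ V) :
    psiMap (TensorProduct.map g k.dualMap wt) = g ∘ₗ psiMap wt ∘ₗ k := by
  induction wt using TensorProduct.induction_on with
  | zero => ext; simp [psiMap]
  | tmul η ξ => ext; simp [psiMap]
  | add s t hs ht => simp_all [psiMap_eq_dualTensorHom, LinearMap.add_comp, LinearMap.comp_add]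

lemma phiMap_map (k h : Module.End ℂ V) (w : V ⊗[ℂ] V) :
    phiMap (TensorProduct.map k h w) = h ∘ₗ phiMap w ∘ₗ k.dualMap := by
  induction w using TensorProduct.induction_on with
  | zero => ext; simp [phiMap]
  | tmul u v => ext; simp [phiMap]
  | add s t hs ht => simp_all [phiMap_eq_dualTensorHom, LinearMap.add_comp, LinearMap.comp_add]

variable [FiniteDimensional ℂ V]

lemma psiMap_eq_zero_iff {wt : Dual ℂ V ⊗[ℂ] Dual ℂ V} : psiMap wt = 0 ↔ wt = 0 := by
  rw [psiMap_eq_dualTensorHom, (injective_iff_map_eq_zero' _).mp (dualTensorHom_bijective).1,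
    LinearEquiv.map_eq_zero_iff]

lemma phiMap_eq_zero_iff {w : V ⊗[ℂ] V} : phiMap w = 0 ↔ w = 0 := by
  rw [phiMap_eq_dualTensorHom, (injective_iff_map_eq_zero' _).mp (dualTensorHom_bijective).1,
    ← evalEquiv_toLinearMap, ← LinearEquiv.coe_rTensor, LinearEquiv.coe_coe,
    LinearEquiv.map_eq_zero_iff]

end Contraction

section Intertwining

open Module Coalgebra HopfAlgebra

variable {H V : Type*} [Ring H] [HopfAlgebra ℂ H] [AddCommGroup V] [Module ℂ V]
  (ρ : H →ₐ[ℂ] Module.End ℂ V)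

lemma sandwich_dualRep_psiMap (wt : Dual ℂ V ⊗[ℂ] Dual ℂ V) (c : H ⊗[ℂ] H) :
    sandwich (dualRep ρ) (psiMap wt) (ρ.toLinearMap ∘ₗ antipode ℂ) c =
      psiMap (rep2d ρ c wt) := by
  induction c using TensorProduct.induction_on with
  | zero => simp [rep2d, psiMap_eq_dualTensorHom]
  | tmul a b => simp [rep2d, dualRep, ← LinearMap.dualMap_def, psiMap_map_dualMap]
  | add s t hs ht => simp_all [rep2d, psiMap_eq_dualTensorHom]

lemma sandwich_comm_phiMap (w : V ⊗[ℂ] V) (c : H ⊗[ℂ] H) :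
    sandwich ρ.toLinearMap (phiMap w) (Dual.transpose ∘ₗ ρ.toLinearMap)
      (TensorProduct.comm ℂ H H c) = phiMap (rep2 ρ c w) := by
  induction c using TensorProduct.induction_on with
  | zero => simp [rep2, phiMap_eq_dualTensorHom]
  | tmul a b => simp [rep2, ← LinearMap.dualMap_def, phiMap_map]
  | add s t hs ht => simp_all [rep2, phiMap_eq_dualTensorHom]

theorem psiMap_comp_of_invariant (wt : Dual ℂ V ⊗[ℂ] Dual ℂ V)
    (hwt : ∀ x : H, rep2d ρ (comul (R := ℂ) x) wt = counit (R := ℂ) x • wt) (x : H) :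
    psiMap wt ∘ₗ ρ x = dualRep ρ x ∘ₗ psiMap wt := by
  refine comp_eq_comp_of_sandwich_comul_eq ρ (dualRep ρ) (psiMap wt) (fun y => ?_) x
  rw [sandwich_dualRep_psiMap, hwt, psiMap_eq_dualTensorHom, psiMap_eq_dualTensorHom, map_smul,
    map_smul]

theorem phiMap_comp_of_invariant (w : V ⊗[ℂ] V)
    (hw : ∀ x : H, rep2 ρ (comul (R := ℂ) x) w = counit (R := ℂ) x • w) (x : H) :
    phiMap w ∘ₗ dualRep ρ x = ρ x ∘ₗ phiMap w := by
  refine comp_antipode_eq_comp_of_sandwich_comm_comul_eq (Dual.transpose ∘ₗ ρ.toLinearMap)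
    ?_ ?_ ρ.toLinearMap (phiMap w) (fun y => ?_) x
  · simp [Module.End.one_eq_id, ← LinearMap.dualMap_def]
  · intro a b
    simp [Module.End.mul_eq_comp, ← LinearMap.dualMap_def, LinearMap.dualMap_comp_dualMap]
  · rw [sandwich_comm_phiMap, hw, phiMap_eq_dualTensorHom, phiMap_eq_dualTensorHom, map_smul,
      map_smul]

end Intertwining

section Irreducible

variable {H : Type*}

def IsIrreducibleFamily {R V : Type*} [Semiring R] [AddCommMonoid V] [Module R V]
    (ρ : H → Module.End R V) : Prop :=
  ∀ U : Submodule R V, (∀ (x : H), ∀ u ∈ U, ρ x u ∈ U) → U = ⊥ ∨ U = ⊤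

theorem IsIrreducibleFamily.injective_of_comp_eq_comp {R V W : Type*} [Ring R] [AddCommGroup V]
    [Module R V] [AddCommGroup W] [Module R W] {ρ : H → Module.End R V}
    (hirr : IsIrreducibleFamily ρ)
    (σ : H → Module.End R W) (f : V →ₗ[R] W) (hf : ∀ x, f ∘ₗ ρ x = σ x ∘ₗ f) (hf0 : f ≠ 0) :
    Function.Injective f := by
  have hker : ∀ x, ∀ u ∈ LinearMap.ker f, ρ x u ∈ LinearMap.ker f := fun x u hu => by
    rw [LinearMap.mem_ker] at hu ⊢
    rw [← LinearMap.comp_apply, hf, LinearMap.comp_apply, hu, map_zero]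
  rcases hirr _ hker with h | h
  · exact LinearMap.ker_eq_bot.mp h
  · exact absurd (LinearMap.ker_eq_top.mp h) hf0

theorem IsIrreducibleFamily.exists_eq_smul_id_of_commute {K V : Type*} [Field K] [IsAlgClosed K]
    [AddCommGroup V] [Module K V] [FiniteDimensional K V] [Nontrivial V]
    {ρ : H → Module.End K V} (hirr : IsIrreducibleFamily ρ) (E : Module.End K V)
    (hE : ∀ x, E ∘ₗ ρ x = ρ x ∘ₗ E) : ∃ c : K, E = c • LinearMap.id := by
  obtain ⟨c, hc⟩ := Module.End.exists_eigenvalue E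
  have hinv : ∀ x, ∀ u ∈ E.eigenspace c, ρ x u ∈ E.eigenspace c := fun x u hu => by
    rw [Module.End.mem_eigenspace_iff] at hu ⊢
    rw [← LinearMap.comp_apply, hE, LinearMap.comp_apply, hu, map_smul]
  rcases hirr _ hinv with h | h
  · exact absurd h hc
  · exact ⟨c, LinearMap.ext fun u =>
      Module.End.mem_eigenspace_iff.mp (h ▸ Submodule.mem_top)⟩

end Irreducible

/-- with `w ∈ V ⊗ V` and `w̃ ∈ V* ⊗ V*` nonzero invariant vectors,
`ψ(v) = (id ⊗ ev_v)(w̃)` is an isomorphism of representations `V → V*`, and `φ` and `ψ`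
are mutually inverse up to a nonzero scalar. -/
theorem stmt5 (H V : Type*) [Ring H] [HopfAlgebra ℂ H] [AddCommGroup V] [Module ℂ V]
    [FiniteDimensional ℂ V] (ρ : H →ₐ[ℂ] Module.End ℂ V)
    (hirr : ∀ W : Submodule ℂ V, (∀ (x : H), ∀ u ∈ W, ρ x u ∈ W) → W = ⊥ ∨ W = ⊤)
    (w : V ⊗[ℂ] V) (hw0 : w ≠ 0)
    (hwinv : ∀ x : H, rep2 ρ (Coalgebra.comul (R := ℂ) x) w = Coalgebra.counit (R := ℂ) x • w)
    (wt : Module.Dual ℂ V ⊗[ℂ] Module.Dual ℂ V) (hwt0 : wt ≠ 0)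
    (hwtinv : ∀ x : H,
      rep2d ρ (Coalgebra.comul (R := ℂ) x) wt = Coalgebra.counit (R := ℂ) x • wt) :
    Function.Bijective (psiMap wt)
      ∧ (∀ (x : H) (u : V), psiMap wt (ρ x u) = dualRep ρ x (psiMap wt u))
      ∧ ∃ c : ℂ, c ≠ 0 ∧ (∀ u : V, phiMap w (psiMap wt u) = c • u)
          ∧ (∀ ζ : Module.Dual ℂ V, psiMap wt (phiMap w ζ) = c • ζ) := by
  have hψ := psiMap_comp_of_invariant ρ wt hwtinv
  have hφ := phiMap_comp_of_invariant ρ w hwinv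
  have hψ0 : psiMap wt ≠ 0 := psiMap_eq_zero_iff.not.mpr hwt0
  have hψ_inj := IsIrreducibleFamily.injective_of_comp_eq_comp hirr (dualRep ρ) _ hψ hψ0
  have hψ_bij : Function.Bijective (psiMap wt) := ⟨hψ_inj,
    (LinearMap.injective_iff_surjective_of_finrank_eq_finrank Subspace.dual_finrank_eq.symm).mp
      hψ_inj⟩
  have : Nontrivial V := by
    obtain ⟨v, hv⟩ := DFunLike.ne_iff.mp hψ0
    exact nontrivial_of_ne v 0 fun h => hv (by simp [h])
  obtain ⟨c, hc⟩ :=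
    IsIrreducibleFamily.exists_eq_smul_id_of_commute hirr (phiMap w ∘ₗ psiMap wt) fun x => by
      rw [LinearMap.comp_assoc, hψ, ← LinearMap.comp_assoc, hφ, LinearMap.comp_assoc]
  have hφψ (u : V) : phiMap w (psiMap wt u) = c • u := LinearMap.congr_fun hc u
  have hc0 : c ≠ 0 := by
    rintro rfl
    refine hw0 (phiMap_eq_zero_iff.mp (LinearMap.ext fun ζ => ?_))
    obtain ⟨u, rfl⟩ := hψ_bij.2 ζ
    simp [hφψ]
  refine ⟨hψ_bij, fun x u => LinearMap.congr_fun (hψ x) u, c, hc0, hφψ, fun ζ => ?_⟩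
  obtain ⟨u, rfl⟩ := hψ_bij.2 ζ
  rw [hφψ, map_smul]
end

section
/- Let N ≥ 1 and let R^{ij}_{kl} ∈ ℂ be regarded as an N²×N² matrix with row index (i,j) and column index (k,l). Let (g^{ij}) be an invertible N×N complex matrix and let g̃ be its inverse transpose, so that g^{ik} g̃_{jk} = δ^i_j = g^{ki} g̃_{kj}. Assume the four crossing relations: g^{ij} δ^k_l = R^{jk}_{np} R^{ip}_{ml} g^{mn}; δ^i_j g̃_{kl} = g̃_{mn} R^{mi}_{kp} R^{np}_{lj}; g^{ij} δ^k_l = R^{ki}_{pm} R^{pj}_{ln} g^{mn}; δ^i_j g̃_{kl} = g̃_{mn} R^{in}_{pl} R^{pm}_{jk}. Then R is invertible as an N²×N² matrix and its inverse is given by (R⁻¹)^{ij}_{kl} = g^{mi} R^{nj}_{ml} g̃_{nk} = g^{jm} R^{in}_{km} g̃_{ln}. -/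
/-! The first and third crossing relations, contracted with `g̃` and simplified by the
duality between `g` and `g̃`, say exactly that the two candidate matrices are right inverses
of `R`. Square matrices over a commutative ring are Dedekind-finite, so a right inverse is
two-sided; hence both candidates are the inverse of `R` and coincide. -/

open Finset

theorem Finset.sum_comm_rotate_four {ι α : Type*} [Fintype ι] [AddCommMonoid α]
    (f : ι → ι → ι → ι → α) :
    ∑ a, ∑ b, ∑ c, ∑ d, f a b c d = ∑ d, ∑ a, ∑ b, ∑ c, f a b c d :=
  calc ∑ a, ∑ b, ∑ c, ∑ d, f a b c d
      = ∑ a, ∑ b, ∑ d, ∑ c, f a b c d :=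
        sum_congr rfl fun _ _ => sum_congr rfl fun _ _ => sum_comm
    _ = ∑ a, ∑ d, ∑ b, ∑ c, f a b c d := sum_congr rfl fun _ _ => sum_comm
    _ = ∑ d, ∑ a, ∑ b, ∑ c, f a b c d := sum_comm

theorem Matrix.one_apply_prod {ι α : Type*} [DecidableEq ι] [Semiring α] (a b c d : ι) :
    (1 : Matrix (ι × ι) (ι × ι) α) (a, b) (c, d) =
      (if a = c then 1 else 0) * (if b = d then 1 else 0) := by
  simp only [Matrix.one_apply, Prod.mk.injEq, ite_zero_mul_ite_zero, one_mul]

namespace CrossingRelations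

open Matrix

def pairMatrix {ι α : Type*} (R : ι → ι → ι → ι → α) : Matrix (ι × ι) (ι × ι) α :=
  fun p q => R p.1 p.2 q.1 q.2

variable {ι α : Type*} [Fintype ι] [DecidableEq ι] [CommSemiring α]

/-- `g^{mi} R^{nj}_{ml} g̃_{nk}`: the partial transpose of `R` in the first tensor factor,
twisted by `g` and `g̃`; `twistedTransposeSnd` is the analogue in the second factor. -/
def twistedTransposeFst (g gt : ι → ι → α) (R : ι → ι → ι → ι → α) :
    Matrix (ι × ι) (ι × ι) α :=
  fun p q => ∑ m, ∑ n, g m p.1 * R n p.2 m q.2 * gt n q.1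

def twistedTransposeSnd (g gt : ι → ι → α) (R : ι → ι → ι → ι → α) :
    Matrix (ι × ι) (ι × ι) α :=
  fun p q => ∑ m, ∑ n, g p.2 m * R p.1 n q.1 m * gt q.2 n

theorem pairMatrix_mul_twistedTransposeFst {g gt : ι → ι → α} {R : ι → ι → ι → ι → α}
    (hg' : ∀ i j, ∑ k, g k i * gt k j = if i = j then (1 : α) else 0)
    (hc1 : ∀ i j k l,
      g i j * (if k = l then (1 : α) else 0) = ∑ n, ∑ p, ∑ m, R j k n p * R i p m l * g m n) :
    pairMatrix R * twistedTransposeFst g gt R = 1 := by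
  ext ⟨a, b⟩ ⟨c, d⟩
  calc (pairMatrix R * twistedTransposeFst g gt R) (a, b) (c, d)
      = ∑ n, (∑ x, ∑ y, ∑ m, R a b x y * R n y m d * g m x) * gt n c := by
        simp only [pairMatrix, twistedTransposeFst, mul_apply, Fintype.sum_prod_type, mul_sum,
          sum_mul]
        rw [sum_comm_rotate_four]
        exact sum_congr rfl fun _ _ => sum_congr rfl fun _ _ => sum_congr rfl fun _ _ =>
          sum_congr rfl fun _ _ => by ring
    _ = (∑ n, g n a * gt n c) * (if b = d then 1 else 0) := by
        simp only [← hc1, sum_mul]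
        exact sum_congr rfl fun _ _ => by ring
    _ = (1 : Matrix (ι × ι) (ι × ι) α) (a, b) (c, d) := by rw [hg', one_apply_prod]

theorem pairMatrix_mul_twistedTransposeSnd {g gt : ι → ι → α} {R : ι → ι → ι → ι → α}
    (hg : ∀ i j, ∑ k, g i k * gt j k = if i = j then (1 : α) else 0)
    (hc3 : ∀ i j k l,
      g i j * (if k = l then (1 : α) else 0) = ∑ p, ∑ m, ∑ n, R k i p m * R p j l n * g m n) :
    pairMatrix R * twistedTransposeSnd g gt R = 1 := by
  ext ⟨a, b⟩ ⟨c, d⟩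
  calc (pairMatrix R * twistedTransposeSnd g gt R) (a, b) (c, d)
      = ∑ n, (∑ x, ∑ y, ∑ m, R a b x y * R x n c m * g y m) * gt d n := by
        simp only [pairMatrix, twistedTransposeSnd, mul_apply, Fintype.sum_prod_type, mul_sum,
          sum_mul]
        rw [sum_comm_rotate_four]
        exact sum_congr rfl fun _ _ => sum_congr rfl fun _ _ => sum_congr rfl fun _ _ =>
          sum_congr rfl fun _ _ => by ring
    _ = (if a = c then 1 else 0) * ∑ n, g b n * gt d n := by
        simp only [← hc3, mul_sum]
        exact sum_congr rfl fun _ _ => by ring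
    _ = (1 : Matrix (ι × ι) (ι × ι) α) (a, b) (c, d) := by rw [hg, one_apply_prod]

end CrossingRelations

theorem stmt9_general (N : ℕ)
    (R : Fin N → Fin N → Fin N → Fin N → ℂ) (g gt : Fin N → Fin N → ℂ)
    (hg : ∀ i j : Fin N, ∑ k, g i k * gt j k = if i = j then (1 : ℂ) else 0)
    (hg' : ∀ i j : Fin N, ∑ k, g k i * gt k j = if i = j then (1 : ℂ) else 0)
    (hc1 : ∀ i j k l : Fin N,
      g i j * (if k = l then (1 : ℂ) else 0) = ∑ n, ∑ p, ∑ m, R j k n p * R i p m l * g m n)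
    (hc3 : ∀ i j k l : Fin N,
      g i j * (if k = l then (1 : ℂ) else 0) = ∑ p, ∑ m, ∑ n, R k i p m * R p j l n * g m n) :
    letI M : Matrix (Fin N × Fin N) (Fin N × Fin N) ℂ := fun p q => R p.1 p.2 q.1 q.2
    letI A : Matrix (Fin N × Fin N) (Fin N × Fin N) ℂ :=
      fun p q => ∑ m, ∑ n, g m p.1 * R n p.2 m q.2 * gt n q.1
    letI B : Matrix (Fin N × Fin N) (Fin N × Fin N) ℂ :=
      fun p q => ∑ m, ∑ n, g p.2 m * R p.1 n q.1 m * gt q.2 n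
    M * A = 1 ∧ A * M = 1 ∧ A = B := by
  have hMA := CrossingRelations.pairMatrix_mul_twistedTransposeFst hg' hc1
  have hMB := CrossingRelations.pairMatrix_mul_twistedTransposeSnd hg hc3
  have hAM := mul_eq_one_comm.mp hMA
  exact ⟨hMA, hAM, left_inv_eq_right_inv hAM hMB⟩

/-- the crossing relations imply that the `R`-matrix is invertible as an
`N²×N²`-matrix, with explicit inverse `(R⁻¹)^{ij}_{kl} = g^{mi} R^{nj}_{ml} g̃_{nk}
= g^{jm} R^{in}_{km} g̃_{ln}`. -/
theorem stmt9 (N : ℕ) (hN : 1 ≤ N)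
    (R : Fin N → Fin N → Fin N → Fin N → ℂ) (g gt : Fin N → Fin N → ℂ)
    (hg : ∀ i j : Fin N, ∑ k, g i k * gt j k = if i = j then (1 : ℂ) else 0)
    (hg' : ∀ i j : Fin N, ∑ k, g k i * gt k j = if i = j then (1 : ℂ) else 0)
    (hc1 : ∀ i j k l : Fin N,
      g i j * (if k = l then (1 : ℂ) else 0) = ∑ n, ∑ p, ∑ m, R j k n p * R i p m l * g m n)
    (hc2 : ∀ i j k l : Fin N,
      (if i = j then (1 : ℂ) else 0) * gt k l = ∑ m, ∑ n, ∑ p, gt m n * R m i k p * R n p l j)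
    (hc3 : ∀ i j k l : Fin N,
      g i j * (if k = l then (1 : ℂ) else 0) = ∑ p, ∑ m, ∑ n, R k i p m * R p j l n * g m n)
    (hc4 : ∀ i j k l : Fin N,
      (if i = j then (1 : ℂ) else 0) * gt k l = ∑ m, ∑ n, ∑ p, gt m n * R i n p l * R p m j k) :
    letI M : Matrix (Fin N × Fin N) (Fin N × Fin N) ℂ := fun p q => R p.1 p.2 q.1 q.2
    letI A : Matrix (Fin N × Fin N) (Fin N × Fin N) ℂ :=
      fun p q => ∑ m, ∑ n, g m p.1 * R n p.2 m q.2 * gt n q.1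
    letI B : Matrix (Fin N × Fin N) (Fin N × Fin N) ℂ :=
      fun p q => ∑ m, ∑ n, g p.2 m * R p.1 n q.1 m * gt q.2 n
    M * A = 1 ∧ A * M = 1 ∧ A = B :=
  stmt9_general N R g gt hg hg' hc1 hc3
end

section
/- Let H be a quasitriangular Hopf algebra over ℂ with universal R-matrix R, and (ρ, V) a finite-dimensional representation with basis v₁,…,v_N and R-matrix entries R^{ij}_{kl}. Suppose w = g^{ij} v_j⊗v_i is an invariant vector of V⊗V whose coefficient matrix (g^{ij}) is invertible, and let g̃ be the inverse transpose of g, so that g^{ik} g̃_{jk} = δ^i_j = g^{ki} g̃_{kj}. Then the four crossing relations hold: g^{ij} δ^k_l = R^{jk}_{np} R^{ip}_{ml} g^{mn}; δ^i_j g̃_{kl} = g̃_{mn} R^{mi}_{kp} R^{np}_{lj}; g^{ij} δ^k_l = R^{ki}_{pm} R^{pj}_{ln} g^{mn}; δ^i_j g̃_{kl} = g̃_{mn} R^{in}_{pl} R^{pm}_{jk}. -/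
/-!
Write `φ_ab(x) = ⟨v_a*, ρ(x) v_b⟩` for the matrix coefficients of `ρ` and put
`L_ab = (id ⊗ φ_ab)(R)`, `M_ab = (φ_ab ⊗ id)(R)` in `H`, so that `ρ(L_ab)` and `ρ(M_ab)` have the
entries `R^{ia}_{kb}` and `R^{ai}_{bk}`. Slicing `(Δ ⊗ id)(R) = R₁₃R₂₃` gives
`Δ L_ab = Σ_c L_ac ⊗ L_cb`, and slicing `(id ⊗ Δ)(R) = R₁₃R₁₂` gives `Δ M_ab = Σ_c M_cb ⊗ M_ac`;
the same identities with a counit applied, cancelled against `R⁻¹`, give `(ε ⊗ id)(R) = 1` and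
`(id ⊗ ε)(R) = 1`, hence `ε L_ab = ε M_ab = δ_ab`. Invariance of `w` under `L_kl` is then, in
coordinates, the first crossing relation, and invariance of the flipped vector under `M_kl` is the
third. The first relation says `A G B = G` for matrices indexed by pairs, with `G = g ⊗ 1`
invertible; a one-sided inverse of a square matrix is two-sided, so `B G⁻¹ A = G⁻¹`, which is the
second relation. The fourth comes from the third in the same way.
-/

open TensorProduct

/-- `a ⊗ b ↦ a ⊗ (b ⊗ 1)` -/
noncomputable def emb12 (H : Type*) [Ring H] [Algebra ℂ H] :
    H ⊗[ℂ] H →ₗ[ℂ] H ⊗[ℂ] (H ⊗[ℂ] H) :=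
  TensorProduct.map LinearMap.id (Algebra.TensorProduct.includeLeft (S := ℂ)).toLinearMap

/-- `a ⊗ b ↦ a ⊗ (1 ⊗ b)` -/
noncomputable def emb13 (H : Type*) [Ring H] [Algebra ℂ H] :
    H ⊗[ℂ] H →ₗ[ℂ] H ⊗[ℂ] (H ⊗[ℂ] H) :=
  TensorProduct.map LinearMap.id (Algebra.TensorProduct.includeRight).toLinearMap

/-- `a ⊗ b ↦ 1 ⊗ (a ⊗ b)` -/
noncomputable def emb23 (H : Type*) [Ring H] [Algebra ℂ H] :
    H ⊗[ℂ] H →ₗ[ℂ] H ⊗[ℂ] (H ⊗[ℂ] H) :=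
  (Algebra.TensorProduct.includeRight).toLinearMap

section Slice
variable {K H M N : Type*} [CommRing K] [AddCommGroup H] [Module K H] [AddCommGroup M] [Module K M]
  [AddCommGroup N] [Module K N]

noncomputable def rightSlice (f : H →ₗ[K] K) : M ⊗[K] H →ₗ[K] M :=
  (TensorProduct.rid K M).toLinearMap ∘ₗ LinearMap.lTensor M f

noncomputable def leftSlice (f : H →ₗ[K] K) : H ⊗[K] M →ₗ[K] M :=
  (TensorProduct.lid K M).toLinearMap ∘ₗ LinearMap.rTensor M f

@[simp]
theorem rightSlice_tmul (f : H →ₗ[K] K) (m : M) (h : H) : rightSlice f (m ⊗ₜ h) = f h • m := by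
  simp [rightSlice]

@[simp]
theorem leftSlice_tmul (f : H →ₗ[K] K) (h : H) (m : M) : leftSlice f (h ⊗ₜ m) = f h • m := by
  simp [leftSlice]

theorem rightSlice_rTensor (f : H →ₗ[K] K) (g : M →ₗ[K] N) (t : M ⊗[K] H) :
    rightSlice f (LinearMap.rTensor H g t) = g (rightSlice f t) := by
  induction t using TensorProduct.induction_on with
  | zero => simp
  | add s t hs ht => simp only [map_add, hs, ht]
  | tmul m h => simp

theorem leftSlice_lTensor (f : H →ₗ[K] K) (g : M →ₗ[K] N) (t : H ⊗[K] M) :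
    leftSlice f (LinearMap.lTensor H g t) = g (leftSlice f t) := by
  induction t using TensorProduct.induction_on with
  | zero => simp
  | add s t hs ht => simp only [map_add, hs, ht]
  | tmul m h => simp

theorem apply_rightSlice (f g : H →ₗ[K] K) (t : H ⊗[K] H) :
    g (rightSlice f t) = f (leftSlice g t) := by
  induction t using TensorProduct.induction_on with
  | zero => simp
  | add s t hs ht => simp only [map_add, hs, ht]
  | tmul x y => simp [mul_comm]

end Slice

section MatrixCoeff
variable {K H V ι : Type*} [CommRing K] [Ring H] [Algebra K H] [AddCommGroup V] [Module K V]
  (v : Module.Basis ι K V) (ρ : H →ₐ[K] Module.End K V)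

noncomputable def matrixCoeff (a b : ι) : H →ₗ[K] K :=
  v.coord a ∘ₗ LinearMap.applyₗ (v b) ∘ₗ ρ.toLinearMap

theorem matrixCoeff_apply (a b : ι) (x : H) : matrixCoeff v ρ a b x = v.repr (ρ x (v b)) a :=
  rfl

theorem matrixCoeff_mul [Fintype ι] (a b : ι) (x y : H) :
    matrixCoeff v ρ a b (x * y) = ∑ c, matrixCoeff v ρ a c x * matrixCoeff v ρ c b y := by
  have hy : ρ y (v b) = ∑ c, v.repr (ρ y (v b)) c • v c := (v.sum_repr _).symm
  rw [matrixCoeff_apply, map_mul, Module.End.mul_apply, hy, map_sum, map_sum]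
  simp [matrixCoeff_apply, mul_comm]

theorem matrixCoeff_one [DecidableEq ι] (a b : ι) :
    matrixCoeff v ρ a b 1 = if a = b then 1 else 0 := by
  simp [matrixCoeff_apply, Finsupp.single_apply, eq_comm]

end MatrixCoeff

section Crossing
open Matrix Kronecker
variable {K V ι : Type*} [CommRing K] [AddCommGroup V] [Module K V] [Fintype ι] [DecidableEq ι]

theorem crossing_of_invariant (v : Module.Basis ι K V) (T : ι → ι → Module.End K V)
    (X : ι → ι → ι → ι → K) (hT : ∀ i a k b, v.repr (T a b (v k)) i = X i a k b)
    (g : ι → ι → K)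
    (hinv : ∀ a b, ∑ c, TensorProduct.map (T a c) (T c b) (∑ i, ∑ j, g i j • (v j ⊗ₜ[K] v i))
      = (if a = b then (1 : K) else 0) • ∑ i, ∑ j, g i j • (v j ⊗ₜ[K] v i)) :
    ∀ i j k l, g i j * (if k = l then (1 : K) else 0)
        = ∑ n, ∑ p, ∑ m, X j k n p * X i p m l * g m n := by
  intro i j k l
  have h := congr((v.tensorProduct v).repr $(hinv k l) (j, i))
  simp only [map_sum, map_smul, TensorProduct.map_tmul, Finsupp.coe_finsetSum,
    Finsupp.coe_smul, Finset.sum_apply, Pi.smul_apply, smul_eq_mul,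
    Module.Basis.tensorProduct_repr_tmul_apply, hT, Module.Basis.repr_self,
    Finsupp.single_apply, mul_ite, mul_one, mul_zero, Finset.sum_ite_eq', Finset.mem_univ,
    if_true, ite_mul, one_mul, zero_mul] at h
  rw [mul_boole, ← h, Finset.sum_comm_cycle]
  simp only [mul_comm, mul_left_comm]

theorem dual_crossing_of_crossing (X : ι → ι → ι → ι → K) (g gt : ι → ι → K)
    (hg : ∀ i j, ∑ k, g i k * gt j k = if i = j then (1 : K) else 0)
    (h : ∀ i j k l, g i j * (if k = l then (1 : K) else 0)
        = ∑ n, ∑ p, ∑ m, X j k n p * X i p m l * g m n) :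
    ∀ i j k l, (if i = j then (1 : K) else 0) * gt k l
        = ∑ m, ∑ n, ∑ p, gt m n * X m i k p * X n p l j := by
  -- `h` is `A * G * B = G`, and the claim is the entries of `B * Gi * A = Gi`.
  let A : Matrix (ι × ι) (ι × ι) K := of fun x y => X x.1 y.2 y.1 x.2
  let B : Matrix (ι × ι) (ι × ι) K := of fun x y => X y.1 y.2 x.1 x.2
  let G : Matrix (ι × ι) (ι × ι) K := of g ⊗ₖ 1
  let Gi : Matrix (ι × ι) (ι × ι) K := (of gt)ᵀ ⊗ₖ 1
  have hGGi : G * Gi = 1 := by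
    have : of g * (of gt)ᵀ = 1 := by
      ext i j; simpa [mul_apply, one_apply] using hg i j
    rw [← mul_kronecker_mul, this, one_mul, one_kronecker_one]
  have hAGB : A * G * B = G := by
    ext ⟨i, l⟩ ⟨j, k⟩
    have hij := h i j k l
    simp only [mul_boole, @eq_comm _ k] at hij
    simp only [A, B, G, mul_apply, of_apply, kroneckerMap_apply, one_apply, mul_ite, mul_one,
      mul_zero, Fintype.sum_prod_type, Finset.sum_ite_eq', Finset.mem_univ, if_true,
      Finset.sum_mul, hij]
    simp only [mul_comm, mul_left_comm]
  have hBGiA : B * Gi * A = Gi := by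
    have hGBGiA : G * B * Gi * A = 1 :=
      mul_eq_one_comm.mp (by simp only [← mul_assoc, hAGB, hGGi])
    calc B * Gi * A = Gi * G * B * Gi * A := by rw [mul_eq_one_comm.mp hGGi, one_mul]
      _ = Gi * (G * B * Gi * A) := by simp only [mul_assoc]
      _ = Gi := by rw [hGBGiA, mul_one]
  intro i j k l
  have hentry := congr($hBGiA (l, j) (k, i))
  simp only [A, B, Gi, mul_apply, of_apply, kroneckerMap_apply, transpose_apply, one_apply,
    mul_ite, mul_one, mul_zero, Fintype.sum_prod_type, Finset.sum_ite_eq', Finset.mem_univ,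
    if_true, @eq_comm _ j i] at hentry
  rw [mul_comm, mul_boole, ← hentry]
  refine Finset.sum_congr rfl fun m _ => ?_
  rw [Finset.sum_comm]
  simp only [Finset.mul_sum, mul_comm, mul_left_comm]

end Crossing

section Quasitriangular
open Coalgebra
variable {H : Type*} [Ring H]

theorem rightSlice_emb13_mul_emb23 [Algebra ℂ H] {V ι : Type*} [AddCommGroup V] [Module ℂ V]
    [Fintype ι] (v : Module.Basis ι ℂ V) (ρ : H →ₐ[ℂ] Module.End ℂ V) (a b : ι) (α β : H ⊗[ℂ] H) :
    rightSlice (matrixCoeff v ρ a b) ((TensorProduct.assoc ℂ H H H).symm (emb13 H α * emb23 H β))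
      = ∑ c, rightSlice (matrixCoeff v ρ a c) α ⊗ₜ rightSlice (matrixCoeff v ρ c b) β := by
  induction α using TensorProduct.induction_on with
  | zero => simp
  | add α₁ α₂ h₁ h₂ => simp only [map_add, add_mul, h₁, h₂, add_tmul, Finset.sum_add_distrib]
  | tmul x y =>
    induction β using TensorProduct.induction_on with
    | zero => simp
    | add β₁ β₂ h₁ h₂ => simp only [map_add, mul_add, h₁, h₂, tmul_add, Finset.sum_add_distrib]
    | tmul u w =>
      simp [emb13, emb23, matrixCoeff_mul, Finset.sum_smul, smul_tmul', tmul_smul, smul_smul,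
        mul_comm]

theorem leftSlice_emb13_mul_emb12 [Algebra ℂ H] {V ι : Type*} [AddCommGroup V] [Module ℂ V]
    [Fintype ι] (v : Module.Basis ι ℂ V) (ρ : H →ₐ[ℂ] Module.End ℂ V) (a b : ι) (α β : H ⊗[ℂ] H) :
    leftSlice (matrixCoeff v ρ a b) (emb13 H α * emb12 H β)
      = ∑ c, leftSlice (matrixCoeff v ρ c b) β ⊗ₜ leftSlice (matrixCoeff v ρ a c) α := by
  induction α using TensorProduct.induction_on with
  | zero => simp
  | add α₁ α₂ h₁ h₂ => simp only [map_add, add_mul, h₁, h₂, tmul_add, Finset.sum_add_distrib]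
  | tmul x y =>
    induction β using TensorProduct.induction_on with
    | zero => simp
    | add β₁ β₂ h₁ h₂ => simp only [map_add, mul_add, h₁, h₂, add_tmul, Finset.sum_add_distrib]
    | tmul u w =>
      simp [emb13, emb12, matrixCoeff_mul, Finset.sum_smul, smul_tmul', tmul_smul, smul_smul]

variable [Bialgebra ℂ H] {R Rinv : H ⊗[ℂ] H}

theorem leftSlice_counit_eq_one (hRinv : R * Rinv = 1)
    (h_qt1 : TensorProduct.assoc ℂ H H H (TensorProduct.map comul LinearMap.id R)
      = emb13 H R * emb23 H R) :
    leftSlice (counit (R := ℂ)) R = (1 : H) := by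
  -- Applying `ε` to the first leg turns `h_qt1` into `R = (1 ⊗ (ε ⊗ id) R) * R`.
  let F : H ⊗[ℂ] (H ⊗[ℂ] H) →ₐ[ℂ] H ⊗[ℂ] H :=
    (Algebra.TensorProduct.lid ℂ (H ⊗[ℂ] H)).toAlgHom.comp
      (Algebra.TensorProduct.map (Bialgebra.counitAlgHom ℂ H) (AlgHom.id ℂ _))
  have hF_comul (t : H ⊗[ℂ] H) :
      F (TensorProduct.assoc ℂ H H H (TensorProduct.map comul LinearMap.id t)) = t := by
    induction t using TensorProduct.induction_on with
    | zero => simp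
    | add s t hs ht => simp only [map_add, hs, ht]
    | tmul x y =>
      rw [TensorProduct.map_tmul, ← (ℛ ℂ x).eq]
      simp only [F, sum_tmul, map_sum, assoc_tmul, AlgHom.coe_comp, AlgEquiv.coe_toAlgHom,
        Function.comp_apply, Algebra.TensorProduct.map_tmul, Bialgebra.counitAlgHom_apply,
        AlgHom.coe_id, LinearMap.id_coe, id_eq, Algebra.TensorProduct.lid_tmul]
      simp only [smul_tmul', ← sum_tmul, sum_counit_smul]
  have hF13 (t : H ⊗[ℂ] H) : F (emb13 H t) = 1 ⊗ₜ leftSlice (counit (R := ℂ)) t := by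
    induction t using TensorProduct.induction_on with
    | zero => simp
    | add s t hs ht => simp only [map_add, hs, ht, tmul_add]
    | tmul x y => simp [F, emb13]
  have hF23 (t : H ⊗[ℂ] H) : F (emb23 H t) = t := by simp [F, emb23]
  have h1u : (1 : H) ⊗ₜ[ℂ] leftSlice (counit (R := ℂ)) R = 1 := by
    have h := congr(F $h_qt1)
    rw [hF_comul, map_mul, hF13, hF23] at h
    calc _ = 1 ⊗ₜ leftSlice (counit (R := ℂ)) R * R * Rinv := by rw [mul_assoc, hRinv, mul_one]
      _ = 1 := by rw [← h, hRinv]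
  simpa [Algebra.TensorProduct.one_def] using congr(leftSlice (counit (R := ℂ)) $h1u)

theorem rightSlice_counit_eq_one (hRinv : R * Rinv = 1)
    (h_qt2 : TensorProduct.map LinearMap.id comul R = emb13 H R * emb12 H R) :
    rightSlice (counit (R := ℂ)) R = (1 : H) := by
  -- Applying `ε` to the last leg turns `h_qt2` into `R = ((id ⊗ ε) R ⊗ 1) * R`.
  let G : H ⊗[ℂ] (H ⊗[ℂ] H) →ₐ[ℂ] H ⊗[ℂ] H :=
    Algebra.TensorProduct.map (AlgHom.id ℂ H) ((Algebra.TensorProduct.rid ℂ ℂ H).toAlgHom.comp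
      (Algebra.TensorProduct.map (AlgHom.id ℂ H) (Bialgebra.counitAlgHom ℂ H)))
  have hG_comul (t : H ⊗[ℂ] H) : G (TensorProduct.map LinearMap.id comul t) = t := by
    induction t using TensorProduct.induction_on with
    | zero => simp
    | add s t hs ht => simp only [map_add, hs, ht]
    | tmul x y =>
      have h := congr(TensorProduct.rid ℂ H $(lTensor_counit_comul (R := ℂ) y))
      rw [TensorProduct.rid_tmul, one_smul] at h
      simp only [G, map_tmul, Algebra.TensorProduct.map_tmul]
      exact congrArg _ h
  have hG13 (t : H ⊗[ℂ] H) : G (emb13 H t) = rightSlice (counit (R := ℂ)) t ⊗ₜ 1 := by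
    induction t using TensorProduct.induction_on with
    | zero => simp
    | add s t hs ht => simp only [map_add, hs, ht, add_tmul]
    | tmul x y => simp [G, emb13, smul_tmul']
  have hG12 (t : H ⊗[ℂ] H) : G (emb12 H t) = t := by
    induction t using TensorProduct.induction_on with
    | zero => simp
    | add s t hs ht => simp only [map_add, hs, ht]
    | tmul x y => simp [G, emb12]
  have hu1 : rightSlice (counit (R := ℂ)) R ⊗ₜ[ℂ] (1 : H) = 1 := by
    have h := congr(G $h_qt2)
    rw [hG_comul, map_mul, hG13, hG12] at h
    calc _ = rightSlice (counit (R := ℂ)) R ⊗ₜ 1 * R * Rinv := by rw [mul_assoc, hRinv, mul_one]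
      _ = 1 := by rw [← h, hRinv]
  simpa [Algebra.TensorProduct.one_def] using congr(rightSlice (counit (R := ℂ)) $hu1)

end Quasitriangular

section Representation
open Coalgebra
variable {H V ι : Type*} [Ring H] [AddCommGroup V] [Module ℂ V] (v : Module.Basis ι ℂ V)

section Bialgebra
variable [Bialgebra ℂ H] (ρ : H →ₐ[ℂ] Module.End ℂ V) {R Rinv : H ⊗[ℂ] H}

theorem comul_rightSlice_matrixCoeff [Fintype ι]
    (h_qt1 : TensorProduct.assoc ℂ H H H (TensorProduct.map comul LinearMap.id R)
      = emb13 H R * emb23 H R) (a b : ι) :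
    comul (R := ℂ) (rightSlice (matrixCoeff v ρ a b) R)
      = ∑ c, rightSlice (matrixCoeff v ρ a c) R ⊗ₜ rightSlice (matrixCoeff v ρ c b) R := by
  have h : LinearMap.rTensor H comul R
      = (TensorProduct.assoc ℂ H H H).symm (emb13 H R * emb23 H R) :=
    (LinearEquiv.eq_symm_apply _).mpr h_qt1
  rw [← rightSlice_rTensor, h, rightSlice_emb13_mul_emb23]

theorem comul_leftSlice_matrixCoeff [Fintype ι]
    (h_qt2 : TensorProduct.map LinearMap.id comul R = emb13 H R * emb12 H R) (a b : ι) :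
    comul (R := ℂ) (leftSlice (matrixCoeff v ρ a b) R)
      = ∑ c, leftSlice (matrixCoeff v ρ c b) R ⊗ₜ leftSlice (matrixCoeff v ρ a c) R := by
  rw [← leftSlice_lTensor, LinearMap.lTensor, h_qt2, leftSlice_emb13_mul_emb12]

theorem counit_rightSlice_matrixCoeff [DecidableEq ι] (hRinv : R * Rinv = 1)
    (h_qt1 : TensorProduct.assoc ℂ H H H (TensorProduct.map comul LinearMap.id R)
      = emb13 H R * emb23 H R) (a b : ι) :
    counit (R := ℂ) (rightSlice (matrixCoeff v ρ a b) R) = if a = b then 1 else 0 := by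
  rw [apply_rightSlice, leftSlice_counit_eq_one hRinv h_qt1, matrixCoeff_one]

theorem counit_leftSlice_matrixCoeff [DecidableEq ι] (hRinv : R * Rinv = 1)
    (h_qt2 : TensorProduct.map LinearMap.id comul R = emb13 H R * emb12 H R) (a b : ι) :
    counit (R := ℂ) (leftSlice (matrixCoeff v ρ a b) R) = if a = b then 1 else 0 := by
  rw [← apply_rightSlice, rightSlice_counit_eq_one hRinv h_qt2, matrixCoeff_one]

end Bialgebra

variable [HopfAlgebra ℂ H] (ρ : H →ₐ[ℂ] Module.End ℂ V)

theorem rep2_tmul (x y : H) : rep2 ρ (x ⊗ₜ y) = TensorProduct.map (ρ x) (ρ y) := by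
  simp [rep2]

theorem repr_rho_rightSlice (t : H ⊗[ℂ] H) (i a k b : ι) :
    v.repr (ρ (rightSlice (matrixCoeff v ρ a b) t) (v k)) i
      = (v.tensorProduct v).repr (rep2 ρ t (v k ⊗ₜ v b)) (i, a) := by
  induction t using TensorProduct.induction_on with
  | zero => simp [rep2]
  | add s t hs ht => simp only [map_add, rep2, LinearMap.add_apply, Finsupp.add_apply, hs, ht]
  | tmul x y => simp [rep2_tmul, matrixCoeff_apply, mul_comm]

theorem repr_rho_leftSlice (t : H ⊗[ℂ] H) (i a k b : ι) :
    v.repr (ρ (leftSlice (matrixCoeff v ρ a b) t) (v k)) i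
      = (v.tensorProduct v).repr (rep2 ρ t (v b ⊗ₜ v k)) (a, i) := by
  induction t using TensorProduct.induction_on with
  | zero => simp [rep2]
  | add s t hs ht => simp only [map_add, rep2, LinearMap.add_apply, Finsupp.add_apply, hs, ht]
  | tmul x y => simp [rep2_tmul, matrixCoeff_apply, mul_comm]

variable [Fintype ι] [DecidableEq ι]

theorem sum_map_eq_smul_of_comul (T : ι → ι → H)
    (hΔ : ∀ a b, comul (R := ℂ) (T a b) = ∑ c, T a c ⊗ₜ T c b)
    (hε : ∀ a b, counit (R := ℂ) (T a b) = if a = b then 1 else 0) (w : V ⊗[ℂ] V)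
    (hw : ∀ x : H, rep2 ρ (comul (R := ℂ) x) w = counit (R := ℂ) x • w) (a b : ι) :
    ∑ c, TensorProduct.map (ρ (T a c)) (ρ (T c b)) w = (if a = b then (1 : ℂ) else 0) • w := by
  rw [← hε, ← hw, hΔ]
  simp [rep2, map_sum]

theorem sum_map_comm_eq_smul_of_comul (T : ι → ι → H)
    (hΔ : ∀ a b, comul (R := ℂ) (T a b) = ∑ c, T c b ⊗ₜ T a c)
    (hε : ∀ a b, counit (R := ℂ) (T a b) = if a = b then 1 else 0) (w : V ⊗[ℂ] V)
    (hw : ∀ x : H, rep2 ρ (comul (R := ℂ) x) w = counit (R := ℂ) x • w) (a b : ι) :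
    ∑ c, TensorProduct.map (ρ (T a c)) (ρ (T c b)) (TensorProduct.comm ℂ V V w)
      = (if a = b then (1 : ℂ) else 0) • TensorProduct.comm ℂ V V w := by
  have h := sum_map_eq_smul_of_comul ρ (fun a b => T b a) (fun a b => hΔ b a)
    (fun a b => (hε b a).trans (by simp only [eq_comm])) w hw b a
  calc _ = TensorProduct.comm ℂ V V (∑ c, TensorProduct.map (ρ (T c b)) (ρ (T a c)) w) := by
        simp [map_sum, TensorProduct.map_comm]
    _ = _ := by rw [h, map_smul]; simp only [eq_comm]

end Representation

theorem stmt11_general (H V : Type*) [Ring H] [HopfAlgebra ℂ H] [AddCommGroup V] [Module ℂ V]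
    (N : ℕ) (v : Module.Basis (Fin N) ℂ V) (ρ : H →ₐ[ℂ] Module.End ℂ V)
    (R Rinv : H ⊗[ℂ] H)
    (hRinv : R * Rinv = 1)
    (h_qt1 : (TensorProduct.assoc ℂ H H H)
        ((TensorProduct.map (Coalgebra.comul (R := ℂ)) LinearMap.id) R)
        = emb13 H R * emb23 H R)
    (h_qt2 : (TensorProduct.map LinearMap.id (Coalgebra.comul (R := ℂ))) R
        = emb13 H R * emb12 H R)
    (Rm : Fin N → Fin N → Fin N → Fin N → ℂ)
    (hRm : ∀ k l : Fin N,
      rep2 ρ R (v k ⊗ₜ[ℂ] v l) = ∑ i, ∑ j, Rm i j k l • (v i ⊗ₜ[ℂ] v j))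
    (g gt : Fin N → Fin N → ℂ)
    (hwinv : ∀ x : H, rep2 ρ (Coalgebra.comul (R := ℂ) x) (∑ i, ∑ j, g i j • (v j ⊗ₜ[ℂ] v i))
      = Coalgebra.counit (R := ℂ) x • (∑ i, ∑ j, g i j • (v j ⊗ₜ[ℂ] v i)))
    (hg : ∀ i j : Fin N, ∑ k, g i k * gt j k = if i = j then (1 : ℂ) else 0)
    (hg' : ∀ i j : Fin N, ∑ k, g k i * gt k j = if i = j then (1 : ℂ) else 0) :
    ∀ i j k l : Fin N,
      (g i j * (if k = l then (1 : ℂ) else 0)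
        = ∑ n, ∑ p, ∑ m, Rm j k n p * Rm i p m l * g m n)
      ∧ ((if i = j then (1 : ℂ) else 0) * gt k l
        = ∑ m, ∑ n, ∑ p, gt m n * Rm m i k p * Rm n p l j)
      ∧ (g i j * (if k = l then (1 : ℂ) else 0)
        = ∑ p, ∑ m, ∑ n, Rm k i p m * Rm p j l n * g m n)
      ∧ ((if i = j then (1 : ℂ) else 0) * gt k l
        = ∑ m, ∑ n, ∑ p, gt m n * Rm i n p l * Rm p m j k) := by
  have hRm' : ∀ i j k l, (v.tensorProduct v).repr (rep2 ρ R (v k ⊗ₜ v l)) (i, j) = Rm i j k l := by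
    intro i j k l
    simp [hRm, Module.Basis.tensorProduct_repr_tmul_apply, Finsupp.single_apply]
  have hcomm : TensorProduct.comm ℂ V V (∑ i, ∑ j, g i j • (v j ⊗ₜ v i))
      = ∑ i, ∑ j, g j i • (v j ⊗ₜ v i) := by
    simp only [map_sum, map_smul, TensorProduct.comm_tmul]
    exact Finset.sum_comm
  have h1 := crossing_of_invariant v (fun a b => ρ (rightSlice (matrixCoeff v ρ a b) R)) Rm
    (fun i a k b => by rw [repr_rho_rightSlice, hRm']) g
    (sum_map_eq_smul_of_comul ρ _ (comul_rightSlice_matrixCoeff v ρ h_qt1)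
      (counit_rightSlice_matrixCoeff v ρ hRinv h_qt1) _ hwinv)
  have h3 := crossing_of_invariant v (fun a b => ρ (leftSlice (matrixCoeff v ρ a b) R))
    (fun i a k b => Rm a i b k) (fun i a k b => by rw [repr_rho_leftSlice, hRm'])
    (fun i j => g j i)
    (hcomm ▸ sum_map_comm_eq_smul_of_comul ρ _ (comul_leftSlice_matrixCoeff v ρ h_qt2)
      (counit_leftSlice_matrixCoeff v ρ hRinv h_qt2) _ hwinv)
  have h2 := dual_crossing_of_crossing Rm g gt hg h1
  have h4 := dual_crossing_of_crossing _ (fun i j => g j i) (fun i j => gt j i) hg' h3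
  intro i j k l
  refine ⟨h1 i j k l, h2 i j k l, ?_, ?_⟩
  · rw [h3 j i k l, Finset.sum_comm]
  · rw [h4 i j l k, Finset.sum_comm]

/-- if `w = g^{ij} v_j ⊗ v_i` is an invariant vector with invertible coefficient
matrix, then the representation matrix of the universal R-matrix satisfies the four
crossing relations with `g` and its inverse transpose `g̃`. -/
theorem stmt11 (H V : Type*) [Ring H] [HopfAlgebra ℂ H] [AddCommGroup V] [Module ℂ V]
    (N : ℕ) (v : Module.Basis (Fin N) ℂ V) (ρ : H →ₐ[ℂ] Module.End ℂ V)
    (R Rinv : H ⊗[ℂ] H)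
    (hRinv : R * Rinv = 1) (hRinv' : Rinv * R = 1)
    (h_intw : ∀ x : H,
      (TensorProduct.comm ℂ H H) (Coalgebra.comul (R := ℂ) x)
        = R * (Coalgebra.comul (R := ℂ) x) * Rinv)
    (h_qt1 : (TensorProduct.assoc ℂ H H H)
        ((TensorProduct.map (Coalgebra.comul (R := ℂ)) LinearMap.id) R)
        = emb13 H R * emb23 H R)
    (h_qt2 : (TensorProduct.map LinearMap.id (Coalgebra.comul (R := ℂ))) R
        = emb13 H R * emb12 H R)
    (Rm : Fin N → Fin N → Fin N → Fin N → ℂ)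
    (hRm : ∀ k l : Fin N,
      rep2 ρ R (v k ⊗ₜ[ℂ] v l) = ∑ i, ∑ j, Rm i j k l • (v i ⊗ₜ[ℂ] v j))
    (g gt : Fin N → Fin N → ℂ)
    (hwinv : ∀ x : H, rep2 ρ (Coalgebra.comul (R := ℂ) x) (∑ i, ∑ j, g i j • (v j ⊗ₜ[ℂ] v i))
      = Coalgebra.counit (R := ℂ) x • (∑ i, ∑ j, g i j • (v j ⊗ₜ[ℂ] v i)))
    (hg : ∀ i j : Fin N, ∑ k, g i k * gt j k = if i = j then (1 : ℂ) else 0)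
    (hg' : ∀ i j : Fin N, ∑ k, g k i * gt k j = if i = j then (1 : ℂ) else 0) :
    ∀ i j k l : Fin N,
      (g i j * (if k = l then (1 : ℂ) else 0)
        = ∑ n, ∑ p, ∑ m, Rm j k n p * Rm i p m l * g m n)
      ∧ ((if i = j then (1 : ℂ) else 0) * gt k l
        = ∑ m, ∑ n, ∑ p, gt m n * Rm m i k p * Rm n p l j)
      ∧ (g i j * (if k = l then (1 : ℂ) else 0)
        = ∑ p, ∑ m, ∑ n, Rm k i p m * Rm p j l n * g m n)
      ∧ ((if i = j then (1 : ℂ) else 0) * gt k l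
        = ∑ m, ∑ n, ∑ p, gt m n * Rm i n p l * Rm p m j k) :=
  stmt11_general H V N v ρ R Rinv hRinv h_qt1 h_qt2 Rm hRm g gt hwinv hg hg'
end

section
/- Fix N ≥ 1 and complex constants R^{ij}_{kl}, g^{ij}, g̃_{ij}, f^{ij}_k, f̃^i_{jk} satisfying (gs): g^{ik} g̃_{jk} = δ^i_j = g^{ki} g̃_{kj}; (fs): g^{ni} f^{lm}_n g̃_{lj} g̃_{mk} = f̃^i_{jk} = g^{in} f^{lm}_n g̃_{jl} g̃_{km}; and (rg): R^{ij}_{kl} g^{km} g^{ln} = g^{jl} g^{ik} R^{mn}_{kl}. Then the algebra A_{Rgf} admits a Hopf algebra structure: there exist a ℂ-algebra homomorphism Δ : A_{Rgf} → A_{Rgf}⊗A_{Rgf} with Δ(t^i_j) = t^i_k ⊗ t^k_j, a ℂ-algebra homomorphism ε : A_{Rgf} → ℂ with ε(t^i_j) = δ^i_j, and a ℂ-linear algebra anti-homomorphism S : A_{Rgf} → A_{Rgf} with S(t^i_j) = g^{li} t^k_l g̃_{kj}, such that (Δ⊗id)∘Δ = (id⊗Δ)∘Δ, (ε⊗id)∘Δ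 = id = (id⊗ε)∘Δ (under the canonical identifications), and m∘(S⊗id)∘Δ = u∘ε = m∘(id⊗S)∘Δ, where m is the multiplication and u : ℂ → A_{Rgf} the unit map. -/
/-!
Call a matrix `u` with entries in a `ℂ`-algebra a representation if it satisfies the five
relations; algebra maps out of `A_{Rgf}` are the same as representations. Writing
`T₁T₂ = (t^i_m t^j_n)` and `T₂T₁ = (t^j_n t^i_m)`, indexed by pairs, the relations read
`R T₁T₂ = T₂T₁ R`, `T₂T₁ G = G`, `G̃ T₁T₂ = G̃`, `F T = T₂T₁ F`, `F̃ T₁T₂ = T F̃` with constant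
matrices `R, G, G̃, F, F̃`. These are stable under products of representations with commuting
entries, which gives `Δ` from `T ⊗ 1` and `1 ⊗ T`; the identity matrix is a representation, which
gives `ε`.

By (TGC), (TTG) and (gs), `S(T)^i_j = g^{li} t^k_l g̃_{kj}` is a two-sided inverse of `T`.
Conjugating the relations by it shows that `S(T)` is a representation in the opposite algebra:
inverting swaps `T₁T₂` and `T₂T₁`, and so does reversing products. This gives `S` as an
anti-homomorphism. Coassociativity and the counit laws are equalities of algebra maps, so they
are checked on generators. The antipode laws hold on generators because `S(T) T = 1 = T S(T)`,
and the set where they hold is closed under products because `S` reverses them.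
-/

open TensorProduct

/-- The defining relations of the FRT-type algebra `A_{Rgf}`:
(RTT), (TTG), (TGC), (TTF) and (TFC), on the free algebra on the generators `t^i_j`. -/
inductive ARgfRel (N : ℕ) (R : Fin N → Fin N → Fin N → Fin N → ℂ)
    (g gt : Fin N → Fin N → ℂ) (f ft : Fin N → Fin N → Fin N → ℂ) :
    FreeAlgebra ℂ (Fin N × Fin N) → FreeAlgebra ℂ (Fin N × Fin N) → Prop
  | rtt (i j m n : Fin N) : ARgfRel N R g gt f ft
      (∑ k, ∑ l, R i j k l • (FreeAlgebra.ι ℂ (k, m) * FreeAlgebra.ι ℂ (l, n)))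
      (∑ k, ∑ l, R k l m n • (FreeAlgebra.ι ℂ (j, l) * FreeAlgebra.ι ℂ (i, k)))
  | ttg (i j : Fin N) : ARgfRel N R g gt f ft
      (algebraMap ℂ _ (g i j))
      (∑ k, ∑ l, g k l • (FreeAlgebra.ι ℂ (j, l) * FreeAlgebra.ι ℂ (i, k)))
  | tgc (m n : Fin N) : ARgfRel N R g gt f ft
      (∑ k, ∑ l, gt k l • (FreeAlgebra.ι ℂ (k, m) * FreeAlgebra.ι ℂ (l, n)))
      (algebraMap ℂ _ (gt m n))
  | ttf (i j m : Fin N) : ARgfRel N R g gt f ft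
      (∑ k, f i j k • FreeAlgebra.ι ℂ (k, m))
      (∑ k, ∑ l, f k l m • (FreeAlgebra.ι ℂ (j, l) * FreeAlgebra.ι ℂ (i, k)))
  | tfc (j m n : Fin N) : ARgfRel N R g gt f ft
      (∑ k, ∑ l, ft j k l • (FreeAlgebra.ι ℂ (k, m) * FreeAlgebra.ι ℂ (l, n)))
      (∑ l, ft l m n • FreeAlgebra.ι ℂ (j, l))

/-- The FRT-type algebra `A_{Rgf}`: the quotient of the free algebra on the `t^i_j`
by the relations above. -/
abbrev ARgf (N : ℕ) (R : Fin N → Fin N → Fin N → Fin N → ℂ)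
    (g gt : Fin N → Fin N → ℂ) (f ft : Fin N → Fin N → Fin N → ℂ) : Type :=
  RingQuot (ARgfRel N R g gt f ft)

/-- The generator `t^i_j` of `A_{Rgf}`. -/
noncomputable def tgen (N : ℕ) (R : Fin N → Fin N → Fin N → Fin N → ℂ)
    (g gt : Fin N → Fin N → ℂ) (f ft : Fin N → Fin N → Fin N → ℂ) (i j : Fin N) :
    ARgf N R g gt f ft :=
  RingQuot.mkAlgHom ℂ (ARgfRel N R g gt f ft) (FreeAlgebra.ι ℂ (i, j))


namespace FRT

open MulOpposite

variable {ι P B : Type*}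

section Relations

variable [Fintype ι] [Fintype P] [Semiring B] [Algebra ℂ B]

theorem map_op_algebraMap_mul {α β γ : Type*} [Fintype β] (c : Matrix α β ℂ)
    (M : Matrix β γ B) :
    (c.map (algebraMap ℂ B) * M).map op = c.map (algebraMap ℂ Bᵐᵒᵖ) * M.map op := by
  ext
  simp [Matrix.mul_apply, Algebra.commutes]

theorem map_op_mul_algebraMap {α β γ : Type*} [Fintype β] (M : Matrix α β B)
    (c : Matrix β γ ℂ) :
    (M * c.map (algebraMap ℂ B)).map op = M.map op * c.map (algebraMap ℂ Bᵐᵒᵖ) := by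
  ext
  simp [Matrix.mul_apply, ← Algebra.commutes]

/-- The relations (RTT), (TTG), (TGC), (TTF), (TFC) in matrix form, with `X` and `Y` in the roles
of `T₁T₂` and `T₂T₁`. -/
structure MatrixRelations (Rc : Matrix P P ℂ) (Gc : Matrix P Unit ℂ) (Gtc : Matrix Unit P ℂ)
    (Fc : Matrix P ι ℂ) (Ftc : Matrix ι P ℂ) (T : Matrix ι ι B) (X Y : Matrix P P B) : Prop where
  rtt : Rc.map (algebraMap ℂ B) * X = Y * Rc.map (algebraMap ℂ B)
  ttg : Y * Gc.map (algebraMap ℂ B) = Gc.map (algebraMap ℂ B)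
  tgc : Gtc.map (algebraMap ℂ B) * X = Gtc.map (algebraMap ℂ B)
  ttf : Fc.map (algebraMap ℂ B) * T = Y * Fc.map (algebraMap ℂ B)
  tfc : Ftc.map (algebraMap ℂ B) * X = T * Ftc.map (algebraMap ℂ B)

namespace MatrixRelations

variable {Rc : Matrix P P ℂ} {Gc : Matrix P Unit ℂ} {Gtc : Matrix Unit P ℂ}
  {Fc : Matrix P ι ℂ} {Ftc : Matrix ι P ℂ}

theorem one [DecidableEq ι] [DecidableEq P] :
    MatrixRelations (B := B) Rc Gc Gtc Fc Ftc 1 1 1 := by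
  constructor <;> simp

theorem mul {T T' : Matrix ι ι B} {X X' Y Y' : Matrix P P B}
    (h : MatrixRelations Rc Gc Gtc Fc Ftc T X Y) (h' : MatrixRelations Rc Gc Gtc Fc Ftc T' X' Y') :
    MatrixRelations Rc Gc Gtc Fc Ftc (T * T') (X * X') (Y * Y') where
  rtt := by rw [← Matrix.mul_assoc, h.rtt, Matrix.mul_assoc, h'.rtt, Matrix.mul_assoc]
  ttg := by rw [Matrix.mul_assoc, h'.ttg, h.ttg]
  tgc := by rw [← Matrix.mul_assoc, h.tgc, h'.tgc]
  ttf := by rw [← Matrix.mul_assoc, h.ttf, Matrix.mul_assoc, h'.ttf, Matrix.mul_assoc]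
  tfc := by rw [← Matrix.mul_assoc, h.tfc, Matrix.mul_assoc, h'.tfc, Matrix.mul_assoc]

theorem of_inverse [DecidableEq ι] [DecidableEq P] {T T' : Matrix ι ι B}
    {X X' Y Y' : Matrix P P B} (h : MatrixRelations Rc Gc Gtc Fc Ftc T X Y)
    (hT : T * T' = 1) (hT' : T' * T = 1) (hX : X * X' = 1) (hY : Y' * Y = 1) :
    MatrixRelations Rc Gc Gtc Fc Ftc T' X' Y' where
  rtt := by
    rw [← Matrix.one_mul (_ * X'), ← hY, Matrix.mul_assoc, ← Matrix.mul_assoc _ _ X', ← h.rtt,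
      Matrix.mul_assoc, hX, Matrix.mul_one]
  ttg := by rw [← h.ttg, ← Matrix.mul_assoc, hY, Matrix.one_mul, h.ttg]
  tgc := by rw [← h.tgc, Matrix.mul_assoc, hX, Matrix.mul_one, h.tgc]
  ttf := by
    rw [← Matrix.one_mul (_ * T'), ← hY, Matrix.mul_assoc, ← Matrix.mul_assoc _ _ T', ← h.ttf,
      Matrix.mul_assoc, hT, Matrix.mul_one]
  tfc := by
    rw [← Matrix.one_mul (_ * X'), ← hT', Matrix.mul_assoc, ← Matrix.mul_assoc _ _ X', ← h.tfc,
      Matrix.mul_assoc, hX, Matrix.mul_one]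

theorem map_op {T : Matrix ι ι B} {X Y : Matrix P P B}
    (h : MatrixRelations Rc Gc Gtc Fc Ftc T X Y) :
    MatrixRelations Rc Gc Gtc Fc Ftc (T.map op) (X.map op) (Y.map op) where
  rtt := by rw [← map_op_algebraMap_mul, ← map_op_mul_algebraMap, h.rtt]
  ttg := by rw [← map_op_mul_algebraMap, h.ttg]; rfl
  tgc := by rw [← map_op_algebraMap_mul, h.tgc]; rfl
  ttf := by rw [← map_op_algebraMap_mul, ← map_op_mul_algebraMap, h.ttf]
  tfc := by rw [← map_op_algebraMap_mul, ← map_op_mul_algebraMap, h.tfc]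

end MatrixRelations

end Relations

variable [Semiring B]

def mat12 (u : Matrix ι ι B) : Matrix (ι × ι) (ι × ι) B :=
  Matrix.of fun p q => u p.1 q.1 * u p.2 q.2

def mat21 (u : Matrix ι ι B) : Matrix (ι × ι) (ι × ι) B :=
  Matrix.of fun p q => u p.2 q.2 * u p.1 q.1

theorem mat12_one [DecidableEq ι] : mat12 (1 : Matrix ι ι B) = 1 := by
  ext ⟨i, j⟩ ⟨m, n⟩
  by_cases i = m <;> by_cases j = n <;> simp [mat12, Matrix.one_apply, *]

theorem mat21_one [DecidableEq ι] : mat21 (1 : Matrix ι ι B) = 1 := by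
  ext ⟨i, j⟩ ⟨m, n⟩
  by_cases i = m <;> by_cases j = n <;> simp [mat21, Matrix.one_apply, *]

theorem mat12_map_op (u : Matrix ι ι B) : mat12 (u.map op) = (mat21 u).map op := rfl

theorem mat21_map_op (u : Matrix ι ι B) : mat21 (u.map op) = (mat12 u).map op := rfl

variable [Fintype ι] {u v : Matrix ι ι B}

theorem mat12_mul (h : ∀ i j k l, Commute (v i j) (u k l)) :
    mat12 (u * v) = mat12 u * mat12 v := by
  ext ⟨i, j⟩ ⟨m, n⟩
  simp only [mat12, Matrix.of_apply, Matrix.mul_apply, Fintype.sum_prod_type, Finset.sum_mul_sum]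
  refine Finset.sum_congr rfl fun k _ => Finset.sum_congr rfl fun l _ => ?_
  rw [mul_assoc, ← mul_assoc (v k m), (h k m j l).eq, mul_assoc, mul_assoc]

theorem mat21_mul (h : ∀ i j k l, Commute (v i j) (u k l)) :
    mat21 (u * v) = mat21 u * mat21 v := by
  ext ⟨i, j⟩ ⟨m, n⟩
  simp only [mat21, Matrix.of_apply, Matrix.mul_apply, Fintype.sum_prod_type, Finset.sum_mul_sum]
  rw [Finset.sum_comm]
  refine Finset.sum_congr rfl fun k _ => Finset.sum_congr rfl fun l _ => ?_
  rw [mul_assoc, ← mul_assoc (v l n), (h l n i k).eq, mul_assoc, mul_assoc]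

theorem mat12_mul_mat21 [DecidableEq ι] (h : u * v = 1) : mat12 u * mat21 v = 1 := by
  ext ⟨i, j⟩ ⟨m, n⟩
  have hv : ∀ a b, ∑ k, u a k * v k b = if a = b then 1 else 0 := fun a b => by
    rw [← Matrix.mul_apply, h, Matrix.one_apply]
  calc ∑ p, mat12 u (i, j) p * mat21 v p (m, n)
      = ∑ k, u i k * (∑ l, u j l * v l n) * v k m := by
        simp [mat12, mat21, Fintype.sum_prod_type, Finset.mul_sum, Finset.sum_mul, mul_assoc]
    _ = (1 : Matrix (ι × ι) (ι × ι) B) (i, j) (m, n) := by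
        by_cases i = m <;> by_cases j = n <;> simp [Matrix.one_apply, *]

end FRT

section AntiMultiplicative

variable {K A : Type*} [CommSemiring K] [Semiring A] [Algebra K A] {S : A →ₗ[K] A}
  (hS : ∀ a b, S (a * b) = S b * S a)
include hS

theorem mul'_map_left_mul_tmul (x : A ⊗[K] A) (b c : A) :
    LinearMap.mul' K A (map S LinearMap.id (x * b ⊗ₜ c))
      = S b * LinearMap.mul' K A (map S LinearMap.id x) * c := by
  induction x using TensorProduct.induction_on with
  | zero => simp
  | tmul a a' => simp [hS, mul_assoc]
  | add x y hx hy => simp [add_mul, mul_add, hx, hy]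

theorem mul'_map_left_mul_of_eq_algebraMap {x : A ⊗[K] A} {r : K}
    (hx : LinearMap.mul' K A (map S LinearMap.id x) = algebraMap K A r) (y : A ⊗[K] A) :
    LinearMap.mul' K A (map S LinearMap.id (x * y))
      = r • LinearMap.mul' K A (map S LinearMap.id y) := by
  induction y using TensorProduct.induction_on with
  | zero => simp
  | tmul b c =>
    simp [mul'_map_left_mul_tmul hS, hx, Algebra.smul_def, Algebra.commutes, mul_assoc]
  | add y z hy hz => simp [mul_add, hy, hz]

theorem mul'_map_right_tmul_mul (y : A ⊗[K] A) (a b : A) :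
    LinearMap.mul' K A (map LinearMap.id S (a ⊗ₜ b * y))
      = a * LinearMap.mul' K A (map LinearMap.id S y) * S b := by
  induction y using TensorProduct.induction_on with
  | zero => simp
  | tmul c c' => simp [hS, mul_assoc]
  | add x y hx hy => simp [add_mul, mul_add, hx, hy]

theorem mul'_map_right_mul_of_eq_algebraMap {y : A ⊗[K] A} {r : K}
    (hy : LinearMap.mul' K A (map LinearMap.id S y) = algebraMap K A r) (x : A ⊗[K] A) :
    LinearMap.mul' K A (map LinearMap.id S (x * y))
      = r • LinearMap.mul' K A (map LinearMap.id S x) := by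
  induction x using TensorProduct.induction_on with
  | zero => simp
  | tmul a b =>
    simp [mul'_map_right_tmul_mul hS, hy, Algebra.smul_def, Algebra.commutes, mul_assoc]
  | add x z hx hz => simp [add_mul, hx, hz]

end AntiMultiplicative

namespace ARgf

open FRT

variable {N : ℕ} {R : Fin N → Fin N → Fin N → Fin N → ℂ} {g gt : Fin N → Fin N → ℂ}
  {f ft : Fin N → Fin N → Fin N → ℂ} {B : Type*} [Semiring B] [Algebra ℂ B]

variable (R g gt f ft) in
def IsRep (u : Matrix (Fin N) (Fin N) B) : Prop :=
  MatrixRelations (Matrix.of fun p q : Fin N × Fin N => R p.1 p.2 q.1 q.2)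
    (Matrix.of fun p (_ : Unit) => g p.1 p.2) (Matrix.of fun (_ : Unit) p => gt p.1 p.2)
    (Matrix.of fun p k => f p.1 p.2 k) (Matrix.of fun j p => ft j p.1 p.2)
    u (mat12 u) (mat21 u)

theorem isRep_iff {u : Matrix (Fin N) (Fin N) B} :
    IsRep R g gt f ft u ↔ ∀ ⦃x y⦄, ARgfRel N R g gt f ft x y →
      FreeAlgebra.lift ℂ (fun p => u p.1 p.2) x = FreeAlgebra.lift ℂ (fun p => u p.1 p.2) y := by
  constructor
  · rintro ⟨hrtt, httg, htgc, httf, htfc⟩ x y h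
    cases h with
    | rtt i j m n =>
      simpa [Matrix.mul_apply, Fintype.sum_prod_type, mat12, mat21, Algebra.smul_def,
        ← Algebra.commutes] using congrFun₂ hrtt (i, j) (m, n)
    | ttg i j =>
      simpa [Matrix.mul_apply, Fintype.sum_prod_type, mat12, mat21, Algebra.smul_def,
        ← Algebra.commutes] using (congrFun₂ httg (i, j) ()).symm
    | tgc m n =>
      simpa [Matrix.mul_apply, Fintype.sum_prod_type, mat12, mat21, Algebra.smul_def,
        ← Algebra.commutes] using congrFun₂ htgc () (m, n)
    | ttf i j m =>
      simpa [Matrix.mul_apply, Fintype.sum_prod_type, mat12, mat21, Algebra.smul_def,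
        ← Algebra.commutes] using congrFun₂ httf (i, j) m
    | tfc j m n =>
      simpa [Matrix.mul_apply, Fintype.sum_prod_type, mat12, mat21, Algebra.smul_def,
        ← Algebra.commutes] using congrFun₂ htfc j (m, n)
  · intro h
    constructor
    · ext ⟨i, j⟩ ⟨m, n⟩
      simpa [Matrix.mul_apply, Fintype.sum_prod_type, mat12, mat21, Algebra.smul_def,
        ← Algebra.commutes] using h (ARgfRel.rtt i j m n)
    · ext ⟨i, j⟩ ⟨⟩
      simpa [Matrix.mul_apply, Fintype.sum_prod_type, mat12, mat21, Algebra.smul_def,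
        ← Algebra.commutes] using (h (ARgfRel.ttg i j)).symm
    · ext ⟨⟩ ⟨m, n⟩
      simpa [Matrix.mul_apply, Fintype.sum_prod_type, mat12, mat21, Algebra.smul_def,
        ← Algebra.commutes] using h (ARgfRel.tgc m n)
    · ext ⟨i, j⟩ m
      simpa [Matrix.mul_apply, Fintype.sum_prod_type, mat12, mat21, Algebra.smul_def,
        ← Algebra.commutes] using h (ARgfRel.ttf i j m)
    · ext j ⟨m, n⟩
      simpa [Matrix.mul_apply, Fintype.sum_prod_type, mat12, mat21, Algebra.smul_def,
        ← Algebra.commutes] using h (ARgfRel.tfc j m n)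

noncomputable def lift (u : Matrix (Fin N) (Fin N) B) (hu : IsRep R g gt f ft u) :
    ARgf N R g gt f ft →ₐ[ℂ] B :=
  RingQuot.liftAlgHom ℂ ⟨FreeAlgebra.lift ℂ (fun p => u p.1 p.2), isRep_iff.1 hu⟩

@[simp]
theorem lift_tgen (u : Matrix (Fin N) (Fin N) B) (hu : IsRep R g gt f ft u) (i j : Fin N) :
    lift u hu (tgen N R g gt f ft i j) = u i j := by
  simp [lift, tgen]

theorem algHom_ext {φ ψ : ARgf N R g gt f ft →ₐ[ℂ] B}
    (h : ∀ i j, φ (tgen N R g gt f ft i j) = ψ (tgen N R g gt f ft i j)) : φ = ψ := by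
  apply RingQuot.ringQuot_ext'
  ext p
  exact h p.1 p.2

theorem induction {motive : ARgf N R g gt f ft → Prop}
    (algebraMap : ∀ r, motive (algebraMap ℂ _ r)) (tgen : ∀ i j, motive (tgen N R g gt f ft i j))
    (add : ∀ a b, motive a → motive b → motive (a + b))
    (mul : ∀ a b, motive a → motive b → motive (a * b)) (a : ARgf N R g gt f ft) : motive a := by
  obtain ⟨x, rfl⟩ := RingQuot.mkAlgHom_surjective ℂ _ a
  induction x using FreeAlgebra.induction with
  | grade0 r => simpa using algebraMap r
  | grade1 p => exact tgen p.1 p.2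
  | add x y hx hy => simpa using add _ _ hx hy
  | mul x y hx hy => simpa using mul _ _ hx hy

theorem isRep_tgen : IsRep R g gt f ft (Matrix.of (tgen N R g gt f ft)) := by
  have hlift : FreeAlgebra.lift ℂ (fun p : Fin N × Fin N => tgen N R g gt f ft p.1 p.2)
      = RingQuot.mkAlgHom ℂ (ARgfRel N R g gt f ft) := by
    ext; simp [tgen]
  exact isRep_iff.2 fun x y h => by
    simpa only [Matrix.of_apply, hlift] using RingQuot.mkAlgHom_rel ℂ h

theorem IsRep.map {C : Type*} [Semiring C] [Algebra ℂ C] {u : Matrix (Fin N) (Fin N) B}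
    (hu : IsRep R g gt f ft u) (φ : B →ₐ[ℂ] C) : IsRep R g gt f ft (u.map φ) := by
  have hφ : FreeAlgebra.lift ℂ (fun p : Fin N × Fin N => u.map φ p.1 p.2)
      = φ.comp (FreeAlgebra.lift ℂ (fun p : Fin N × Fin N => u p.1 p.2)) := by
    ext; simp
  exact isRep_iff.2 fun x y h => by simp only [hφ, AlgHom.comp_apply, isRep_iff.1 hu h]

theorem isRep_one : IsRep R g gt f ft (1 : Matrix (Fin N) (Fin N) B) := by
  rw [IsRep, mat12_one, mat21_one]
  exact MatrixRelations.one

theorem IsRep.mul {u v : Matrix (Fin N) (Fin N) B} (hu : IsRep R g gt f ft u)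
    (hv : IsRep R g gt f ft v) (h : ∀ i j k l, Commute (v i j) (u k l)) :
    IsRep R g gt f ft (u * v) := by
  rw [IsRep, mat12_mul h, mat21_mul h]
  exact MatrixRelations.mul hu hv

theorem IsRep.map_op_of_inverse {u v : Matrix (Fin N) (Fin N) B} (hu : IsRep R g gt f ft u)
    (huv : u * v = 1) (hvu : v * u = 1) : IsRep R g gt f ft (v.map MulOpposite.op) := by
  rw [IsRep, mat12_map_op, mat21_map_op]
  exact (hu.of_inverse huv hvu (mat12_mul_mat21 huv) (mat12_mul_mat21 hvu)).map_op

variable (N R g gt f ft) in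
noncomputable def comul : ARgf N R g gt f ft →ₐ[ℂ] ARgf N R g gt f ft ⊗[ℂ] ARgf N R g gt f ft :=
  lift ((Matrix.of (tgen N R g gt f ft)).map Algebra.TensorProduct.includeLeft
      * (Matrix.of (tgen N R g gt f ft)).map Algebra.TensorProduct.includeRight)
    ((isRep_tgen.map _).mul (isRep_tgen.map _) fun _ _ _ _ =>
      (Commute.one_left _).tmul (Commute.one_right _))

theorem comul_tgen (i j : Fin N) :
    comul N R g gt f ft (tgen N R g gt f ft i j)
      = ∑ k, tgen N R g gt f ft i k ⊗ₜ[ℂ] tgen N R g gt f ft k j := by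
  simp [comul, Matrix.mul_apply]

variable (N R g gt f ft) in
noncomputable def counit : ARgf N R g gt f ft →ₐ[ℂ] ℂ :=
  lift 1 isRep_one

theorem counit_tgen (i j : Fin N) :
    counit N R g gt f ft (tgen N R g gt f ft i j) = if i = j then 1 else 0 := by
  simp [counit, Matrix.one_apply]

theorem coassoc (a : ARgf N R g gt f ft) :
    TensorProduct.assoc ℂ _ _ _
        (map (comul N R g gt f ft).toLinearMap LinearMap.id (comul N R g gt f ft a))
      = map LinearMap.id (comul N R g gt f ft).toLinearMap (comul N R g gt f ft a) := by
  have h : (Algebra.TensorProduct.assoc ℂ ℂ ℂ _ _ _).toAlgHom.comp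
        ((Algebra.TensorProduct.map (comul N R g gt f ft) (.id ℂ _)).comp (comul N R g gt f ft))
      = (Algebra.TensorProduct.map (.id ℂ _) (comul N R g gt f ft)).comp (comul N R g gt f ft) :=
    algHom_ext fun i j => by
      simp only [AlgHom.comp_apply, comul_tgen,
         map_sum, Algebra.TensorProduct.map_tmul, AlgHom.id_apply, tmul_sum, sum_tmul]
      exact Finset.sum_comm
  exact congr($h a)

theorem lid_map_counit_comul (a : ARgf N R g gt f ft) :
    TensorProduct.lid ℂ _
      (map (counit N R g gt f ft).toLinearMap LinearMap.id (comul N R g gt f ft a)) = a := by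
  have h : (Algebra.TensorProduct.lid ℂ _).toAlgHom.comp
        ((Algebra.TensorProduct.map (counit N R g gt f ft) (.id ℂ _)).comp (comul N R g gt f ft))
      = .id ℂ _ :=
    algHom_ext fun i j => by simp [comul_tgen, counit_tgen]
  exact congr($h a)

theorem rid_map_counit_comul (a : ARgf N R g gt f ft) :
    TensorProduct.rid ℂ _
      (map LinearMap.id (counit N R g gt f ft).toLinearMap (comul N R g gt f ft a)) = a := by
  have h : (Algebra.TensorProduct.rid ℂ ℂ _).toAlgHom.comp
        ((Algebra.TensorProduct.map (.id ℂ _) (counit N R g gt f ft)).comp (comul N R g gt f ft))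
      = .id ℂ _ :=
    algHom_ext fun i j => by simp [comul_tgen, counit_tgen]
  exact congr($h a)

theorem tgen_tgc (m n : Fin N) :
    ∑ k, ∑ l, gt k l • (tgen N R g gt f ft k m * tgen N R g gt f ft l n)
      = algebraMap ℂ (ARgf N R g gt f ft) (gt m n) := by
  simpa [tgen] using
    RingQuot.mkAlgHom_rel ℂ (ARgfRel.tgc (R := R) (g := g) (f := f) (ft := ft) m n)

theorem tgen_ttg (i j : Fin N) :
    ∑ k, ∑ l, g k l • (tgen N R g gt f ft j l * tgen N R g gt f ft i k)
      = algebraMap ℂ (ARgf N R g gt f ft) (g i j) := by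
  simpa [tgen] using
    (RingQuot.mkAlgHom_rel ℂ (ARgfRel.ttg (R := R) (gt := gt) (f := f) (ft := ft) i j)).symm

variable (N R g gt f ft) in
noncomputable def antipodeMat : Matrix (Fin N) (Fin N) (ARgf N R g gt f ft) :=
  Matrix.of fun i j => ∑ k, ∑ l, (g l i * gt k j) • tgen N R g gt f ft k l

variable (hg : ∀ i j, ∑ k, g k i * gt k j = if i = j then 1 else 0)
include hg

theorem antipodeMat_mul_tgen : antipodeMat N R g gt f ft * Matrix.of (tgen N R g gt f ft) = 1 := by
  ext i j
  calc (antipodeMat N R g gt f ft * Matrix.of (tgen N R g gt f ft)) i j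
      = ∑ q, g q i • ∑ p, ∑ k, gt p k • (tgen N R g gt f ft p q * tgen N R g gt f ft k j) := by
        simp only [antipodeMat, Matrix.mul_apply, Matrix.of_apply, Finset.sum_mul,
          Finset.smul_sum, smul_mul_assoc, smul_smul]
        rw [Finset.sum_comm_cycle]
        exact Finset.sum_congr rfl fun _ _ => Finset.sum_comm
    _ = algebraMap ℂ _ (∑ q, g q i * gt q j) := by
        simp_rw [tgen_tgc]
        simp [Algebra.smul_def]
    _ = (1 : Matrix (Fin N) (Fin N) (ARgf N R g gt f ft)) i j := by
        rw [hg, Matrix.one_apply]; split_ifs <;> simp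

theorem tgen_mul_antipodeMat : Matrix.of (tgen N R g gt f ft) * antipodeMat N R g gt f ft = 1 := by
  ext i j
  calc (Matrix.of (tgen N R g gt f ft) * antipodeMat N R g gt f ft) i j
      = ∑ p, gt p j • ∑ q, ∑ k, g q k • (tgen N R g gt f ft i k * tgen N R g gt f ft p q) := by
        simp only [antipodeMat, Matrix.mul_apply, Matrix.of_apply, Finset.mul_sum,
          Finset.smul_sum, mul_smul_comm, smul_smul, mul_comm (gt _ _)]
        rw [Finset.sum_comm_cycle, Finset.sum_comm_cycle]
    _ = algebraMap ℂ _ (∑ p, g p i * gt p j) := by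
        simp_rw [tgen_ttg]
        simp [Algebra.smul_def, ← map_mul, mul_comm]
    _ = (1 : Matrix (Fin N) (Fin N) (ARgf N R g gt f ft)) i j := by
        rw [hg, Matrix.one_apply]; split_ifs <;> simp

noncomputable def antipodeOp : ARgf N R g gt f ft →ₐ[ℂ] (ARgf N R g gt f ft)ᵐᵒᵖ :=
  lift _ (isRep_tgen.map_op_of_inverse (tgen_mul_antipodeMat hg) (antipodeMat_mul_tgen hg))

noncomputable def antipode : ARgf N R g gt f ft →ₗ[ℂ] ARgf N R g gt f ft :=
  (MulOpposite.opLinearEquiv ℂ).symm.toLinearMap ∘ₗ (antipodeOp hg).toLinearMap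

theorem antipode_mul (a b : ARgf N R g gt f ft) :
    antipode hg (a * b) = antipode hg b * antipode hg a := by
  simp [antipode]

theorem antipode_algebraMap (r : ℂ) :
    antipode hg (algebraMap ℂ (ARgf N R g gt f ft) r) = algebraMap ℂ _ r := by
  simp [antipode]

theorem antipode_one : antipode hg (1 : ARgf N R g gt f ft) = 1 := by
  simpa using antipode_algebraMap hg 1

theorem antipode_tgen (i j : Fin N) :
    antipode hg (tgen N R g gt f ft i j)
      = ∑ k, ∑ l, (g l i * gt k j) • tgen N R g gt f ft k l := by
  simp [antipode, antipodeOp, antipodeMat]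

theorem mul'_map_antipode_comul (a : ARgf N R g gt f ft) :
    LinearMap.mul' ℂ _ (map (antipode hg) LinearMap.id (comul N R g gt f ft a))
      = algebraMap ℂ _ (counit N R g gt f ft a) := by
  induction a using induction with
  | algebraMap r => simp [antipode_algebraMap hg]
  | tgen i j =>
    simpa [comul_tgen, counit_tgen, antipode_tgen hg, antipodeMat, Matrix.mul_apply,
      Matrix.one_apply]
      using congrFun₂ (antipodeMat_mul_tgen (R := R) (f := f) (ft := ft) hg) i j
  | add a b ha hb => simp [ha, hb]
  | mul a b ha hb =>
    rw [map_mul, mul'_map_left_mul_of_eq_algebraMap (antipode_mul hg) ha, hb, map_mul,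
      map_mul, Algebra.smul_def]

theorem mul'_map_comul_antipode (a : ARgf N R g gt f ft) :
    LinearMap.mul' ℂ _ (map LinearMap.id (antipode hg) (comul N R g gt f ft a))
      = algebraMap ℂ _ (counit N R g gt f ft a) := by
  induction a using induction with
  | algebraMap r => simp [Algebra.TensorProduct.algebraMap_apply, antipode_one hg]
  | tgen i j =>
    simpa [comul_tgen, counit_tgen, antipode_tgen hg, antipodeMat, Matrix.mul_apply,
      Matrix.one_apply]
      using congrFun₂ (tgen_mul_antipodeMat (R := R) (f := f) (ft := ft) hg) i j
  | add a b ha hb => simp [ha, hb]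
  | mul a b ha hb =>
    rw [map_mul, mul'_map_right_mul_of_eq_algebraMap (antipode_mul hg) hb, ha, map_mul,
      map_mul, Algebra.smul_def]
    exact Algebra.commutes _ _

end ARgf

theorem stmt13_general (N : ℕ)
    (R : Fin N → Fin N → Fin N → Fin N → ℂ) (g gt : Fin N → Fin N → ℂ)
    (f ft : Fin N → Fin N → Fin N → ℂ)
    (hgs : ∀ i j : Fin N, (∑ k, g i k * gt j k = if i = j then (1 : ℂ) else 0)
      ∧ (∑ k, g k i * gt k j = if i = j then (1 : ℂ) else 0))
 :
    letI A := ARgf N R g gt f ft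
    letI t := tgen N R g gt f ft
    ∃ (Δ : A →ₐ[ℂ] A ⊗[ℂ] A) (ε : A →ₐ[ℂ] ℂ) (S : A →ₗ[ℂ] A),
      (∀ i j : Fin N, Δ (t i j) = ∑ k, t i k ⊗ₜ[ℂ] t k j)
      ∧ (∀ i j : Fin N, ε (t i j) = if i = j then (1 : ℂ) else 0)
      ∧ (∀ a b : A, S (a * b) = S b * S a) ∧ S 1 = 1
      ∧ (∀ i j : Fin N, S (t i j) = ∑ k, ∑ l, (g l i * gt k j) • t k l)
      ∧ (∀ a : A, (TensorProduct.assoc ℂ A A A)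
            ((TensorProduct.map Δ.toLinearMap LinearMap.id) (Δ a))
          = (TensorProduct.map LinearMap.id Δ.toLinearMap) (Δ a))
      ∧ (∀ a : A, (TensorProduct.lid ℂ A)
            ((TensorProduct.map ε.toLinearMap LinearMap.id) (Δ a)) = a)
      ∧ (∀ a : A, (TensorProduct.rid ℂ A)
            ((TensorProduct.map LinearMap.id ε.toLinearMap) (Δ a)) = a)
      ∧ (∀ a : A, (LinearMap.mul' ℂ A) ((TensorProduct.map S LinearMap.id) (Δ a))
          = algebraMap ℂ A (ε a))
      ∧ (∀ a : A, (LinearMap.mul' ℂ A) ((TensorProduct.map LinearMap.id S) (Δ a))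
          = algebraMap ℂ A (ε a)) := by
  have hg i j := (hgs i j).2
  exact ⟨ARgf.comul N R g gt f ft, ARgf.counit N R g gt f ft, ARgf.antipode hg,
    ARgf.comul_tgen, ARgf.counit_tgen, ARgf.antipode_mul hg, ARgf.antipode_one hg,
    ARgf.antipode_tgen hg, ARgf.coassoc, ARgf.lid_map_counit_comul, ARgf.rid_map_counit_comul,
    ARgf.mul'_map_antipode_comul hg, ARgf.mul'_map_comul_antipode hg⟩

/-- under the conditions (gs), (fs) and (rg) on the structure constants, the
algebra `A_{Rgf}` admits a Hopf algebra structure with `Δ(t^i_j) = t^i_k ⊗ t^k_j`,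
`ε(t^i_j) = δ^i_j` and `S(t^i_j) = g^{li} t^k_l g̃_{kj}`. -/
theorem stmt13 (N : ℕ) (hN : 1 ≤ N)
    (R : Fin N → Fin N → Fin N → Fin N → ℂ) (g gt : Fin N → Fin N → ℂ)
    (f ft : Fin N → Fin N → Fin N → ℂ)
    (hgs : ∀ i j : Fin N, (∑ k, g i k * gt j k = if i = j then (1 : ℂ) else 0)
      ∧ (∑ k, g k i * gt k j = if i = j then (1 : ℂ) else 0))
    (hfs : ∀ i j k : Fin N,
      (∑ n, ∑ l, ∑ m', g n i * f l m' n * gt l j * gt m' k = ft i j k)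
      ∧ (∑ n, ∑ l, ∑ m', g i n * f l m' n * gt j l * gt k m' = ft i j k))
    (hrg : ∀ i j m' n : Fin N,
      ∑ k, ∑ l, R i j k l * g k m' * g l n = ∑ k, ∑ l, g j l * g i k * R k l m' n)
 :
    letI A := ARgf N R g gt f ft
    letI t := tgen N R g gt f ft
    ∃ (Δ : A →ₐ[ℂ] A ⊗[ℂ] A) (ε : A →ₐ[ℂ] ℂ) (S : A →ₗ[ℂ] A),
      (∀ i j : Fin N, Δ (t i j) = ∑ k, t i k ⊗ₜ[ℂ] t k j)
      ∧ (∀ i j : Fin N, ε (t i j) = if i = j then (1 : ℂ) else 0)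
      ∧ (∀ a b : A, S (a * b) = S b * S a) ∧ S 1 = 1
      ∧ (∀ i j : Fin N, S (t i j) = ∑ k, ∑ l, (g l i * gt k j) • t k l)
      ∧ (∀ a : A, (TensorProduct.assoc ℂ A A A)
            ((TensorProduct.map Δ.toLinearMap LinearMap.id) (Δ a))
          = (TensorProduct.map LinearMap.id Δ.toLinearMap) (Δ a))
      ∧ (∀ a : A, (TensorProduct.lid ℂ A)
            ((TensorProduct.map ε.toLinearMap LinearMap.id) (Δ a)) = a)
      ∧ (∀ a : A, (TensorProduct.rid ℂ A)
            ((TensorProduct.map LinearMap.id ε.toLinearMap) (Δ a)) = a)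
      ∧ (∀ a : A, (LinearMap.mul' ℂ A) ((TensorProduct.map S LinearMap.id) (Δ a))
          = algebraMap ℂ A (ε a))
      ∧ (∀ a : A, (LinearMap.mul' ℂ A) ((TensorProduct.map LinearMap.id S) (Δ a))
          = algebraMap ℂ A (ε a)) :=
  stmt13_general N R g gt f ft hgs
end

section
/- Fix N ≥ 1 and complex constants R^{ij}_{kl}, g^{ij}, g̃_{ij}, f^{ij}_k, f̃^i_{jk} satisfying (gs), (fs), (rg), the Yang–Baxter equation (YB), and the eight crossing relations, and suppose the N²×N² matrix R (row index (i,j), column index (k,l)) is invertible. Set (R⁺)^{ij}_{kl} := R^{ji}_{lk} and (R⁻)^{ij}_{kl} := (R⁻¹)^{ij}_{kl}. For each sign ± define the algebra homomorphism L^± from the free associative unital ℂ-algebra on the generators t^i_j to Mat_N(ℂ) by letting L^±(t^i_j) be the matrix whose (k,m) entry is (R^±)^{ki}_{mj}. Then L^± annihilates all defining relations (RTT), (TTG), (TGC), (TTF), (TFC) of A_{Rgf}, and hence descends to a ℂ-algebra homomorphism A_{Rgf} → Mat_N(ℂ); equivalently, the linear functionals l^{±,i}_j on A_{Rgf} determined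 on monomials by l^{±,k₀}_{k_ν}(t^{i₁}_{j₁}⋯t^{i_ν}_{j_ν}) = (R^±)^{k₀i₁}_{k₁j₁}⋯(R^±)^{k_{ν−1}i_ν}_{k_νj_ν} (with l^{±,i}_j(1) = δ^i_j) are well defined. -/
open TensorProduct
namespace Stmt14Aux

lemma rot3 {M : Type*} [AddCommMonoid M] {α β γ : Type*} [Fintype α] [Fintype β] [Fintype γ]
    (F : α → β → γ → M) :
    ∑ a, ∑ b, ∑ c, F a b c = ∑ b, ∑ c, ∑ a, F a b c :=
  Finset.sum_comm.trans (Finset.sum_congr rfl fun _ _ => Finset.sum_comm)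

lemma swap13 {M : Type*} [AddCommMonoid M] {α β γ : Type*} [Fintype α] [Fintype β] [Fintype γ]
    (F : α → β → γ → M) :
    ∑ a, ∑ b, ∑ c, F a b c = ∑ c, ∑ b, ∑ a, F a b c :=
  (rot3 _).trans ((rot3 _).trans (Finset.sum_congr rfl fun _ _ => Finset.sum_comm))

lemma lcancel {n m : Type*} [Fintype n] [Fintype m] [DecidableEq n]
    {A A' : Matrix n n ℂ} (hA : A' * A = 1) {X Y : Matrix n m ℂ}
    (h : A * X = A * Y) : X = Y := by
  have h2 := congrArg (fun Z => A' * Z) h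
  simpa only [← Matrix.mul_assoc, hA, Matrix.one_mul] using h2

variable {N : ℕ}

def M12 (R : Fin N → Fin N → Fin N → Fin N → ℂ) :
    Matrix (Fin N × Fin N × Fin N) (Fin N × Fin N × Fin N) ℂ :=
  Matrix.of fun p q => R p.1 p.2.1 q.1 q.2.1 * (if p.2.2 = q.2.2 then 1 else 0)

def M13 (R : Fin N → Fin N → Fin N → Fin N → ℂ) :
    Matrix (Fin N × Fin N × Fin N) (Fin N × Fin N × Fin N) ℂ :=
  Matrix.of fun p q => R p.1 p.2.2 q.1 q.2.2 * (if p.2.1 = q.2.1 then 1 else 0)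

def M23 (R : Fin N → Fin N → Fin N → Fin N → ℂ) :
    Matrix (Fin N × Fin N × Fin N) (Fin N × Fin N × Fin N) ℂ :=
  Matrix.of fun p q => (if p.1 = q.1 then 1 else 0) * R p.2.1 p.2.2 q.2.1 q.2.2

def MR (R : Fin N → Fin N → Fin N → Fin N → ℂ) :
    Matrix (Fin N × Fin N) (Fin N × Fin N) ℂ :=
  Matrix.of fun p q => R p.1 p.2 q.1 q.2

def GHat (g : Fin N → Fin N → ℂ) : Matrix (Fin N × Fin N × Fin N) (Fin N) ℂ :=
  Matrix.of fun p q => (if p.1 = q then 1 else 0) * g p.2.1 p.2.2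

def GTil (gt : Fin N → Fin N → ℂ) : Matrix (Fin N) (Fin N × Fin N × Fin N) ℂ :=
  Matrix.of fun p q => (if p = q.1 then 1 else 0) * gt q.2.1 q.2.2

def FHat (f : Fin N → Fin N → Fin N → ℂ) :
    Matrix (Fin N × Fin N × Fin N) (Fin N × Fin N) ℂ :=
  Matrix.of fun p q => (if p.1 = q.1 then 1 else 0) * f p.2.1 p.2.2 q.2

def FTil (ft : Fin N → Fin N → Fin N → ℂ) :
    Matrix (Fin N × Fin N) (Fin N × Fin N × Fin N) ℂ :=
  Matrix.of fun p q => (if p.1 = q.1 then 1 else 0) * ft p.2 q.2.1 q.2.2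

section inv
variable (R Rinv : Fin N → Fin N → Fin N → Fin N → ℂ)

lemma M12_inv (hRinv : ∀ i j k l : Fin N,
      ∑ a, ∑ b, R i j a b * Rinv a b k l
        = (if i = k then (1 : ℂ) else 0) * (if j = l then (1 : ℂ) else 0)) :
    M12 R * M12 Rinv = 1 := by
  ext ⟨a, b, c⟩ ⟨d, e, f⟩
  simp only [Matrix.mul_apply, M12, Matrix.of_apply, Fintype.sum_prod_type, Matrix.one_apply,
    mul_ite, ite_mul, mul_one, one_mul, mul_zero, zero_mul, Finset.sum_ite_eq,
    Finset.sum_ite_eq', Finset.mem_univ, if_true, Prod.mk.injEq]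
  rcases eq_or_ne c f with h | h <;> rcases eq_or_ne a d with h2 | h2 <;>
    simp [h, h2, hRinv, ite_and]

lemma M13_inv (hRinv : ∀ i j k l : Fin N,
      ∑ a, ∑ b, R i j a b * Rinv a b k l
        = (if i = k then (1 : ℂ) else 0) * (if j = l then (1 : ℂ) else 0)) :
    M13 R * M13 Rinv = 1 := by
  ext ⟨a, b, c⟩ ⟨d, e, f⟩
  simp only [Matrix.mul_apply, M13, Matrix.of_apply, Fintype.sum_prod_type, Matrix.one_apply,
    mul_ite, ite_mul, mul_one, one_mul, mul_zero, zero_mul, Finset.sum_ite_eq,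
    Finset.sum_ite_eq', Finset.mem_univ, if_true, Prod.mk.injEq]
  rcases eq_or_ne b e with h | h <;> rcases eq_or_ne a d with h2 | h2 <;>
    simp [h, h2, hRinv, ite_and]

lemma MR_inv (hRinv : ∀ i j k l : Fin N,
      ∑ a, ∑ b, R i j a b * Rinv a b k l
        = (if i = k then (1 : ℂ) else 0) * (if j = l then (1 : ℂ) else 0)) :
    MR R * MR Rinv = 1 := by
  ext ⟨a, b⟩ ⟨d, e⟩
  simp only [Matrix.mul_apply, MR, Matrix.of_apply, Fintype.sum_prod_type, Matrix.one_apply,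
    Prod.mk.injEq]
  rcases eq_or_ne a d with h2 | h2 <;> simp [h2, hRinv, ite_and]

end inv

section enc
variable (R : Fin N → Fin N → Fin N → Fin N → ℂ) (g gt : Fin N → Fin N → ℂ)
  (f ft : Fin N → Fin N → Fin N → ℂ)

lemma encYB (hYB : ∀ i₁ i₂ i₃ k₁ k₂ k₃ : Fin N,
      ∑ j₁, ∑ j₂, ∑ j₃, R i₁ i₂ j₁ j₂ * R j₁ i₃ k₁ j₃ * R j₂ j₃ k₂ k₃
        = ∑ j₁, ∑ j₂, ∑ j₃, R i₂ i₃ j₂ j₃ * R i₁ j₃ j₁ k₃ * R j₁ j₂ k₁ k₂) :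
    M12 R * (M13 R * M23 R) = M23 R * (M13 R * M12 R) := by
  ext ⟨a, b, c⟩ ⟨d, e, f⟩
  simp only [Matrix.mul_apply, M12, M13, M23, Matrix.of_apply, Fintype.sum_prod_type,
    mul_ite, ite_mul, mul_one, one_mul, mul_zero, zero_mul, Finset.sum_ite_eq,
    Finset.sum_ite_eq', Finset.mem_univ, if_true, Finset.sum_ite_irrel, Finset.sum_const_zero,
    Finset.mul_sum, Finset.sum_mul]
  refine Eq.trans ?_ ((hYB a b c d e f).trans ?_)
  · exact Finset.sum_congr rfl fun _ _ => Finset.sum_congr rfl fun _ _ =>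
      Finset.sum_congr rfl fun _ _ => by ring
  · refine (Finset.sum_comm.trans (Finset.sum_congr rfl fun _ _ => Finset.sum_comm)).trans ?_
    exact Finset.sum_congr rfl fun _ _ => Finset.sum_congr rfl fun _ _ =>
      Finset.sum_congr rfl fun _ _ => by ring

lemma encG (hc3 : ∀ i j k l : Fin N,
      g i j * (if k = l then (1 : ℂ) else 0) = ∑ p, ∑ m', ∑ n, R k i p m' * R p j l n * g m' n) :
    M12 R * (M13 R * GHat g) = GHat g := by
  ext ⟨k, i, j⟩ l
  simp only [Matrix.mul_apply, M12, M13, GHat, Matrix.of_apply, Fintype.sum_prod_type,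
    mul_ite, ite_mul, mul_one, one_mul, mul_zero, zero_mul, Finset.sum_ite_eq,
    Finset.sum_ite_eq', Finset.mem_univ, if_true, Finset.sum_ite_irrel, Finset.sum_const_zero,
    Finset.mul_sum, Finset.sum_mul]
  refine Eq.trans ?_ ((hc3 i j k l).symm.trans (by split <;> ring))
  exact Finset.sum_congr rfl fun _ _ => Finset.sum_congr rfl fun _ _ =>
      Finset.sum_congr rfl fun _ _ => by ring

lemma encGT (hc4 : ∀ i j k l : Fin N,
      (if i = j then (1 : ℂ) else 0) * gt k l = ∑ m', ∑ n, ∑ p, gt m' n * R i n p l * R p m' j k) :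
    (GTil gt * M13 R) * M12 R = GTil gt := by
  ext i ⟨j, k, l⟩
  simp only [Matrix.mul_apply, M12, M13, GTil, Matrix.of_apply, Fintype.sum_prod_type,
    mul_ite, ite_mul, mul_one, one_mul, mul_zero, zero_mul, Finset.sum_ite_eq,
    Finset.sum_ite_eq', Finset.mem_univ, if_true, Finset.sum_ite_irrel, Finset.sum_const_zero,
    Finset.mul_sum, Finset.sum_mul]
  refine Eq.trans ?_ (((hc4 i j k l).symm.trans (by split <;> ring)))
  refine Eq.trans ?_ (rot3 _).symm
  refine Eq.trans ?_ (rot3 _).symm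
  exact Finset.sum_congr rfl fun _ _ => Finset.sum_congr rfl fun _ _ =>
      Finset.sum_congr rfl fun _ _ => by ring

lemma encF (hc7 : ∀ i j k l s : Fin N,
      ∑ p, f i j p * R k p l s = ∑ p, ∑ m', ∑ n, R k i p m' * R p j l n * f m' n s) :
    FHat f * MR R = M12 R * (M13 R * FHat f) := by
  ext ⟨k, i, j⟩ ⟨l, s⟩
  simp only [Matrix.mul_apply, M12, M13, FHat, MR, Matrix.of_apply, Fintype.sum_prod_type,
    mul_ite, ite_mul, mul_one, one_mul, mul_zero, zero_mul, Finset.sum_ite_eq,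
    Finset.sum_ite_eq', Finset.mem_univ, if_true, Finset.sum_ite_irrel, Finset.sum_const_zero,
    Finset.mul_sum, Finset.sum_mul]
  refine Eq.trans ?_ ((hc7 i j k l s).trans ?_)
  · exact Finset.sum_congr rfl fun _ _ => by ring
  · exact Finset.sum_congr rfl fun _ _ => Finset.sum_congr rfl fun _ _ =>
      Finset.sum_congr rfl fun _ _ => by ring

lemma encFT (hc8 : ∀ i j k l s : Fin N,
      ∑ p, R i s j p * ft p k l = ∑ m', ∑ n, ∑ p, ft s m' n * R i n p l * R p m' j k) :
    MR R * FTil ft = (FTil ft * M13 R) * M12 R := by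
  ext ⟨i, s⟩ ⟨j, k, l⟩
  simp only [Matrix.mul_apply, M12, M13, FTil, MR, Matrix.of_apply, Fintype.sum_prod_type,
    mul_ite, ite_mul, mul_one, one_mul, mul_zero, zero_mul, Finset.sum_ite_eq,
    Finset.sum_ite_eq', Finset.mem_univ, if_true, Finset.sum_ite_irrel, Finset.sum_const_zero,
    Finset.mul_sum, Finset.sum_mul]
  refine Eq.trans ?_ ((hc8 i j k l s).trans ?_)
  · exact Finset.sum_congr rfl fun _ _ => by ring
  · refine Eq.trans ((rot3 _).trans (rot3 _)) ?_
    exact Finset.sum_congr rfl fun _ _ => Finset.sum_congr rfl fun _ _ =>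
      Finset.sum_congr rfl fun _ _ => by ring

end enc
end Stmt14Aux

/-- the matrix-valued maps `L^±`, defined on generators by
`L^±(t^i_j)_{km} = (R^±)^{ki}_{mj}` with `(R⁺)^{ij}_{kl} = R^{ji}_{lk}` and `R⁻ = R⁻¹`,
annihilate all the defining relations of `A_{Rgf}` and hence descend to algebra homomorphisms
`A_{Rgf} → Mat_N(ℂ)`; equivalently, the functionals `l^{±,i}_j` are well defined. -/
theorem stmt14 (N : ℕ) (hN : 1 ≤ N)
    (R : Fin N → Fin N → Fin N → Fin N → ℂ) (g gt : Fin N → Fin N → ℂ)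
    (f ft : Fin N → Fin N → Fin N → ℂ)
    (hgs : ∀ i j : Fin N, (∑ k, g i k * gt j k = if i = j then (1 : ℂ) else 0)
      ∧ (∑ k, g k i * gt k j = if i = j then (1 : ℂ) else 0))
    (hfs : ∀ i j k : Fin N,
      (∑ n, ∑ l, ∑ m', g n i * f l m' n * gt l j * gt m' k = ft i j k)
      ∧ (∑ n, ∑ l, ∑ m', g i n * f l m' n * gt j l * gt k m' = ft i j k))
    (hrg : ∀ i j m' n : Fin N,
      ∑ k, ∑ l, R i j k l * g k m' * g l n = ∑ k, ∑ l, g j l * g i k * R k l m' n)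
    (hYB : ∀ i₁ i₂ i₃ k₁ k₂ k₃ : Fin N,
      ∑ j₁, ∑ j₂, ∑ j₃, R i₁ i₂ j₁ j₂ * R j₁ i₃ k₁ j₃ * R j₂ j₃ k₂ k₃
        = ∑ j₁, ∑ j₂, ∑ j₃, R i₂ i₃ j₂ j₃ * R i₁ j₃ j₁ k₃ * R j₁ j₂ k₁ k₂)
    (hc1 : ∀ i j k l : Fin N,
      g i j * (if k = l then (1 : ℂ) else 0) = ∑ n, ∑ p, ∑ m', R j k n p * R i p m' l * g m' n)
    (hc2 : ∀ i j k l : Fin N,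
      (if i = j then (1 : ℂ) else 0) * gt k l = ∑ m', ∑ n, ∑ p, gt m' n * R m' i k p * R n p l j)
    (hc3 : ∀ i j k l : Fin N,
      g i j * (if k = l then (1 : ℂ) else 0) = ∑ p, ∑ m', ∑ n, R k i p m' * R p j l n * g m' n)
    (hc4 : ∀ i j k l : Fin N,
      (if i = j then (1 : ℂ) else 0) * gt k l = ∑ m', ∑ n, ∑ p, gt m' n * R i n p l * R p m' j k)
    (hc5 : ∀ i j k l s : Fin N,
      ∑ p, f i j p * R p k s l = ∑ n, ∑ p, ∑ m', R j k n p * R i p m' l * f m' n s)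
    (hc6 : ∀ i j k l s : Fin N,
      ∑ p, R s i p j * ft p k l = ∑ m', ∑ n, ∑ p, ft s m' n * R m' i k p * R n p l j)
    (hc7 : ∀ i j k l s : Fin N,
      ∑ p, f i j p * R k p l s = ∑ p, ∑ m', ∑ n, R k i p m' * R p j l n * f m' n s)
    (hc8 : ∀ i j k l s : Fin N,
      ∑ p, R i s j p * ft p k l = ∑ m', ∑ n, ∑ p, ft s m' n * R i n p l * R p m' j k)
    (Rinv : Fin N → Fin N → Fin N → Fin N → ℂ)
    (hRinv : ∀ i j k l : Fin N,
      ∑ a, ∑ b, R i j a b * Rinv a b k l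
        = (if i = k then (1 : ℂ) else 0) * (if j = l then (1 : ℂ) else 0))
    (hRinv' : ∀ i j k l : Fin N,
      ∑ a, ∑ b, Rinv i j a b * R a b k l
        = (if i = k then (1 : ℂ) else 0) * (if j = l then (1 : ℂ) else 0))
 :
    letI Lp : FreeAlgebra ℂ (Fin N × Fin N) →ₐ[ℂ] Matrix (Fin N) (Fin N) ℂ :=
      FreeAlgebra.lift ℂ (fun p : Fin N × Fin N => Matrix.of fun k m' => R p.1 k p.2 m')
    letI Lm : FreeAlgebra ℂ (Fin N × Fin N) →ₐ[ℂ] Matrix (Fin N) (Fin N) ℂ :=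
      FreeAlgebra.lift ℂ (fun p : Fin N × Fin N => Matrix.of fun k m' => Rinv k p.1 m' p.2)
    (∀ a b : FreeAlgebra ℂ (Fin N × Fin N), ARgfRel N R g gt f ft a b → Lp a = Lp b)
    ∧ (∀ a b : FreeAlgebra ℂ (Fin N × Fin N), ARgfRel N R g gt f ft a b → Lm a = Lm b) := by
  open Stmt14Aux in
  refine ⟨fun a b hrel => ?_, fun a b hrel => ?_⟩
  case' refine_1 => induction hrel with
  | rtt i j m n =>
    ext a b
    simp only [map_sum, map_smul, map_mul, FreeAlgebra.lift_ι_apply, AlgHom.commutes,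
      Matrix.sum_apply, Matrix.smul_apply, Matrix.mul_apply, Matrix.of_apply, smul_eq_mul,
      Finset.mul_sum, Matrix.algebraMap_matrix_apply, Algebra.algebraMap_self, RingHom.id_apply]
    refine Eq.trans ?_ ((hYB i j a m n b).trans ?_)
    · exact Finset.sum_congr rfl fun _ _ => Finset.sum_congr rfl fun _ _ =>
        Finset.sum_congr rfl fun _ _ => by ring
    · exact Finset.sum_congr rfl fun _ _ => Finset.sum_congr rfl fun _ _ =>
        Finset.sum_congr rfl fun _ _ => by ring
  | ttg i j =>
    ext a b
    simp only [map_sum, map_smul, map_mul, FreeAlgebra.lift_ι_apply, AlgHom.commutes,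
      Matrix.sum_apply, Matrix.smul_apply, Matrix.mul_apply, Matrix.of_apply, smul_eq_mul,
      Finset.mul_sum, Matrix.algebraMap_matrix_apply, Algebra.algebraMap_self, RingHom.id_apply]
    refine Eq.trans (show _ = g i j * (if a = b then (1:ℂ) else 0) by split <;> ring)
      ((hc1 i j a b).trans ?_)
    refine Eq.trans ((rot3 _).trans (rot3 _)) ?_
    exact Finset.sum_congr rfl fun _ _ => Finset.sum_congr rfl fun _ _ =>
      Finset.sum_congr rfl fun _ _ => by ring
  | tgc m n =>
    ext a b
    simp only [map_sum, map_smul, map_mul, FreeAlgebra.lift_ι_apply, AlgHom.commutes,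
      Matrix.sum_apply, Matrix.smul_apply, Matrix.mul_apply, Matrix.of_apply, smul_eq_mul,
      Finset.mul_sum, Matrix.algebraMap_matrix_apply, Algebra.algebraMap_self, RingHom.id_apply]
    refine Eq.trans ?_ ((hc2 a b m n).symm.trans (by split <;> ring))
    exact Finset.sum_congr rfl fun _ _ => Finset.sum_congr rfl fun _ _ =>
      Finset.sum_congr rfl fun _ _ => by ring
  | ttf i j m =>
    ext a b
    simp only [map_sum, map_smul, map_mul, FreeAlgebra.lift_ι_apply, AlgHom.commutes,
      Matrix.sum_apply, Matrix.smul_apply, Matrix.mul_apply, Matrix.of_apply, smul_eq_mul,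
      Finset.mul_sum, Matrix.algebraMap_matrix_apply, Algebra.algebraMap_self, RingHom.id_apply]
    refine Eq.trans ?_ ((hc5 i j a b m).trans ?_)
    · exact Finset.sum_congr rfl fun _ _ => by ring
    · refine Eq.trans ((rot3 _).trans (rot3 _)) ?_
      exact Finset.sum_congr rfl fun _ _ => Finset.sum_congr rfl fun _ _ =>
        Finset.sum_congr rfl fun _ _ => by ring
  | tfc j m n =>
    ext a b
    simp only [map_sum, map_smul, map_mul, FreeAlgebra.lift_ι_apply, AlgHom.commutes,
      Matrix.sum_apply, Matrix.smul_apply, Matrix.mul_apply, Matrix.of_apply, smul_eq_mul,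
      Finset.mul_sum, Matrix.algebraMap_matrix_apply, Algebra.algebraMap_self, RingHom.id_apply]
    refine Eq.trans ?_ ((hc6 a b m n j).symm.trans ?_)
    · exact Finset.sum_congr rfl fun _ _ => Finset.sum_congr rfl fun _ _ =>
        Finset.sum_congr rfl fun _ _ => by ring
    · exact Finset.sum_congr rfl fun _ _ => by ring
  case' refine_2 =>
   have I1 : M12 R * M12 Rinv = 1 := M12_inv R Rinv hRinv
  have I2 : M12 Rinv * M12 R = 1 := M12_inv Rinv R hRinv'
  have I3 : M13 R * M13 Rinv = 1 := M13_inv R Rinv hRinv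
  have I4 : M13 Rinv * M13 R = 1 := M13_inv Rinv R hRinv'
  have I5 : MR R * MR Rinv = 1 := MR_inv R Rinv hRinv
  have I6 : MR Rinv * MR R = 1 := MR_inv Rinv R hRinv'
  induction hrel with
  | rtt i j m n =>
    have key : M23 R * (M12 Rinv * M13 Rinv) = M13 Rinv * (M12 Rinv * M23 R) := by
      refine lcancel I4 (lcancel I2 ?_)
      calc M12 R * (M13 R * (M23 R * (M12 Rinv * M13 Rinv)))
          = (M12 R * (M13 R * M23 R)) * (M12 Rinv * M13 Rinv) := by
            rw [Matrix.mul_assoc, Matrix.mul_assoc]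
        _ = M23 R * ((M13 R * M12 R) * (M12 Rinv * M13 Rinv)) := by
            rw [encYB R hYB, Matrix.mul_assoc]
        _ = M23 R := by
            rw [Matrix.mul_assoc, ← Matrix.mul_assoc (M12 R), I1, Matrix.one_mul, I3,
              Matrix.mul_one]
        _ = M12 R * (M13 R * (M13 Rinv * (M12 Rinv * M23 R))) := by
            rw [← Matrix.mul_assoc (M13 R), I3, Matrix.one_mul, ← Matrix.mul_assoc, I1,
              Matrix.one_mul]
    ext a b
    have h := congrFun (congrFun key (a, i, j)) (b, m, n)
    simp only [Matrix.mul_apply, M12, M13, M23, Matrix.of_apply, Fintype.sum_prod_type,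
      mul_ite, ite_mul, mul_one, one_mul, mul_zero, zero_mul, Finset.sum_ite_eq,
      Finset.sum_ite_eq', Finset.mem_univ, if_true, Finset.sum_ite_irrel, Finset.sum_const_zero,
      Finset.mul_sum, Finset.sum_mul] at h
    simp only [map_sum, map_smul, map_mul, FreeAlgebra.lift_ι_apply, Matrix.sum_apply,
      Matrix.smul_apply, Matrix.mul_apply, Matrix.of_apply, smul_eq_mul, Finset.mul_sum]
    refine h.trans (Eq.trans ((rot3 _).trans ((rot3 _).trans
      (Finset.sum_congr rfl fun _ _ => Finset.sum_comm))) ?_)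
    exact Finset.sum_congr rfl fun _ _ => Finset.sum_congr rfl fun _ _ =>
      Finset.sum_congr rfl fun _ _ => by ring
  | ttg i j =>
    have EG := encG R g hc3
    have key : M13 Rinv * (M12 Rinv * GHat g) = GHat g := by
      calc M13 Rinv * (M12 Rinv * GHat g)
          = M13 Rinv * (M12 Rinv * (M12 R * (M13 R * GHat g))) := by rw [EG]
        _ = GHat g := by
            rw [← Matrix.mul_assoc (M12 Rinv), I2, Matrix.one_mul, ← Matrix.mul_assoc, I4,
              Matrix.one_mul]
    ext a b
    have h := congrFun (congrFun key (a, i, j)) b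
    simp only [Matrix.mul_apply, M12, M13, M23, MR, GHat, GTil, FHat, FTil, Matrix.of_apply,
      Fintype.sum_prod_type, mul_ite, ite_mul, mul_one, one_mul, mul_zero, zero_mul,
      Finset.sum_ite_eq, Finset.sum_ite_eq', Finset.mem_univ, if_true, Finset.sum_ite_irrel,
      Finset.sum_const_zero, Finset.mul_sum, Finset.sum_mul] at h
    simp only [map_sum, map_smul, map_mul, FreeAlgebra.lift_ι_apply, AlgHom.commutes,
      Matrix.sum_apply, Matrix.smul_apply, Matrix.mul_apply, Matrix.of_apply, smul_eq_mul,
      Finset.mul_sum, Matrix.algebraMap_matrix_apply, Algebra.algebraMap_self, RingHom.id_apply]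
    refine h.symm.trans ((swap13 _).trans (Finset.sum_congr rfl fun _ _ => Finset.sum_congr rfl fun _ _ =>
      Finset.sum_congr rfl fun _ _ => by ring))
  | tgc m n =>
    have EG := encGT R gt hc4
    have key : (GTil gt * M12 Rinv) * M13 Rinv = GTil gt := by
      calc (GTil gt * M12 Rinv) * M13 Rinv
          = ((((GTil gt * M13 R) * M12 R) * M12 Rinv) * M13 Rinv) := by rw [EG]
        _ = GTil gt := by
            rw [Matrix.mul_assoc _ (M12 R), I1, Matrix.mul_one, Matrix.mul_assoc, I3,
              Matrix.mul_one]
    ext a b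
    have h := congrFun (congrFun key a) (b, m, n)
    simp only [Matrix.mul_apply, M12, M13, M23, MR, GHat, GTil, FHat, FTil, Matrix.of_apply,
      Fintype.sum_prod_type, mul_ite, ite_mul, mul_one, one_mul, mul_zero, zero_mul,
      Finset.sum_ite_eq, Finset.sum_ite_eq', Finset.mem_univ, if_true, Finset.sum_ite_irrel,
      Finset.sum_const_zero, Finset.mul_sum, Finset.sum_mul] at h
    simp only [map_sum, map_smul, map_mul, FreeAlgebra.lift_ι_apply, AlgHom.commutes,
      Matrix.sum_apply, Matrix.smul_apply, Matrix.mul_apply, Matrix.of_apply, smul_eq_mul,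
      Finset.mul_sum, Matrix.algebraMap_matrix_apply, Algebra.algebraMap_self, RingHom.id_apply]
    refine Eq.trans ((swap13 _).trans (Finset.sum_congr rfl fun _ _ => Finset.sum_congr rfl fun _ _ =>
      Finset.sum_congr rfl fun _ _ => by ring)) h
  | ttf i j m =>
    have EF := encF R f hc7
    have key : FHat f * MR Rinv = M13 Rinv * (M12 Rinv * FHat f) := by
      have h1 : FHat f = (M12 R * (M13 R * FHat f)) * MR Rinv := by
        rw [← EF, Matrix.mul_assoc, I5, Matrix.mul_one]
      conv_rhs => rw [h1]
      rw [Matrix.mul_assoc (M12 R), ← Matrix.mul_assoc (M12 Rinv) (M12 R), I2, Matrix.one_mul,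
        Matrix.mul_assoc (M13 R), ← Matrix.mul_assoc (M13 Rinv) (M13 R), I4, Matrix.one_mul]
    ext a b
    have h := congrFun (congrFun key (a, i, j)) (b, m)
    simp only [Matrix.mul_apply, M12, M13, M23, MR, GHat, GTil, FHat, FTil, Matrix.of_apply,
      Fintype.sum_prod_type, mul_ite, ite_mul, mul_one, one_mul, mul_zero, zero_mul,
      Finset.sum_ite_eq, Finset.sum_ite_eq', Finset.mem_univ, if_true, Finset.sum_ite_irrel,
      Finset.sum_const_zero, Finset.mul_sum, Finset.sum_mul] at h
    simp only [map_sum, map_smul, map_mul, FreeAlgebra.lift_ι_apply, AlgHom.commutes,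
      Matrix.sum_apply, Matrix.smul_apply, Matrix.mul_apply, Matrix.of_apply, smul_eq_mul,
      Finset.mul_sum, Matrix.algebraMap_matrix_apply, Algebra.algebraMap_self, RingHom.id_apply]
    refine h.trans ((swap13 _).trans (Finset.sum_congr rfl fun _ _ => Finset.sum_congr rfl fun _ _ =>
      Finset.sum_congr rfl fun _ _ => by ring))
  | tfc j m n =>
    have EF := encFT R ft hc8
    have key : (FTil ft * M12 Rinv) * M13 Rinv = MR Rinv * FTil ft := by
      have h1 : FTil ft = MR Rinv * ((FTil ft * M13 R) * M12 R) := by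
        rw [← EF, ← Matrix.mul_assoc, I6, Matrix.one_mul]
      conv_lhs => rw [h1]
      rw [Matrix.mul_assoc (MR Rinv) _ (M12 Rinv), Matrix.mul_assoc (FTil ft * M13 R), I1,
        Matrix.mul_one, Matrix.mul_assoc (MR Rinv), Matrix.mul_assoc (FTil ft), I3,
        Matrix.mul_one]
    ext a b
    have h := congrFun (congrFun key (a, j)) (b, m, n)
    simp only [Matrix.mul_apply, M12, M13, M23, MR, GHat, GTil, FHat, FTil, Matrix.of_apply,
      Fintype.sum_prod_type, mul_ite, ite_mul, mul_one, one_mul, mul_zero, zero_mul,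
      Finset.sum_ite_eq, Finset.sum_ite_eq', Finset.mem_univ, if_true, Finset.sum_ite_irrel,
      Finset.sum_const_zero, Finset.mul_sum, Finset.sum_mul] at h
    simp only [map_sum, map_smul, map_mul, FreeAlgebra.lift_ι_apply, AlgHom.commutes,
      Matrix.sum_apply, Matrix.smul_apply, Matrix.mul_apply, Matrix.of_apply, smul_eq_mul,
      Finset.mul_sum, Matrix.algebraMap_matrix_apply, Algebra.algebraMap_self, RingHom.id_apply]
    refine Eq.trans ((swap13 _).trans (Finset.sum_congr rfl fun _ _ => Finset.sum_congr rfl fun _ _ =>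
      Finset.sum_congr rfl fun _ _ => by ring)) (h.trans (Finset.sum_congr rfl fun _ _ => by ring))
end

section
/- Fix N ≥ 1 and complex constants R^{ij}_{kl}, g^{ij}, g̃_{ij}, f^{ij}_k, f̃^i_{jk} satisfying (gs): g^{ik} g̃_{jk} = δ^i_j = g^{ki} g̃_{kj}; (fs): g^{ni} f^{lm}_n g̃_{lj} g̃_{mk} = f̃^i_{jk} = g^{in} f^{lm}_n g̃_{jl} g̃_{km}; and (rg): R^{ij}_{kl} g^{km} g^{ln} = g^{jl} g^{ik} R^{mn}_{kl}. Let G be the set of matrices M = (M^i_j) ∈ Mat_N(ℂ) satisfying R^{ij}_{kl} M^k_m M^l_n = M^j_l M^i_k R^{kl}_{mn}, g^{ij} = M^j_l M^i_k g^{kl}, g̃_{kl} M^k_m M^l_n = g̃_{mn}, f^{ij}_k M^k_m = M^j_l M^i_k f^{kl}_m, and f̃^j_{kl} M^k_m M^l_n = M^j_l f̃^l_{mn} for all free indices. Then G is a group under matrix multiplication: the identity matrix lies in G, G is closed under products, every M ∈ G is invertible with inverse given by (M⁻¹)^i_j = g^{li} M^k_l g̃_{kj}, and M⁻¹ ∈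 G. -/
open Matrix

namespace Stmt16Aux

variable {N : ℕ}

def TT (M : Matrix (Fin N) (Fin N) ℂ) : Matrix (Fin N × Fin N) (Fin N × Fin N) ℂ :=
  Matrix.of fun p q => M p.1 q.1 * M p.2 q.2

lemma TT_one : TT (1 : Matrix (Fin N) (Fin N) ℂ) = 1 := by
  ext p q
  simp only [TT, Matrix.of_apply, Matrix.one_apply, Prod.ext_iff]
  by_cases h1 : p.1 = q.1 <;> by_cases h2 : p.2 = q.2 <;> simp [h1, h2]

lemma TT_mul (M M' : Matrix (Fin N) (Fin N) ℂ) : TT (M * M') = TT M * TT M' := by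
  ext p q
  simp only [TT, Matrix.of_apply, Matrix.mul_apply, Fintype.sum_prod_type,
    Finset.sum_mul_sum]
  refine Finset.sum_congr rfl fun k _ => Finset.sum_congr rfl fun l _ => by ring

lemma conj_inv {l m : Type*} [Fintype l] [Fintype m] [DecidableEq l] [DecidableEq m]
    (A : Matrix l m ℂ) (M M' : Matrix m m ℂ) (B B' : Matrix l l ℂ)
    (h : A * M = B * A) (hM : M * M' = 1) (hB : B' * B = 1) :
    A * M' = B' * A := by
  calc A * M' = (B' * B) * (A * M') := by rw [hB, Matrix.one_mul]
    _ = B' * ((B * A) * M') := by rw [Matrix.mul_assoc, Matrix.mul_assoc]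
    _ = B' * ((A * M) * M') := by rw [h]
    _ = B' * (A * (M * M')) := by rw [Matrix.mul_assoc]
    _ = B' * A := by rw [hM, Matrix.mul_one]

end Stmt16Aux

open Stmt16Aux

/-- the solutions of the matrix relations of `A_{Rgf}` form a group under
matrix multiplication, with the inverse given by `(M⁻¹)^i_j = g^{li} M^k_l g̃_{kj}`. -/
theorem stmt16 (N : ℕ) (hN : 1 ≤ N)
    (R : Fin N → Fin N → Fin N → Fin N → ℂ) (g gt : Fin N → Fin N → ℂ)
    (f ft : Fin N → Fin N → Fin N → ℂ)
    (hgs : ∀ i j : Fin N, (∑ k, g i k * gt j k = if i = j then (1 : ℂ) else 0)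
      ∧ (∑ k, g k i * gt k j = if i = j then (1 : ℂ) else 0))
    (hfs : ∀ i j k : Fin N,
      (∑ n, ∑ l, ∑ m', g n i * f l m' n * gt l j * gt m' k = ft i j k)
      ∧ (∑ n, ∑ l, ∑ m', g i n * f l m' n * gt j l * gt k m' = ft i j k))
    (hrg : ∀ i j m' n : Fin N,
      ∑ k, ∑ l, R i j k l * g k m' * g l n = ∑ k, ∑ l, g j l * g i k * R k l m' n) :
    letI memG : Matrix (Fin N) (Fin N) ℂ → Prop := fun M =>
      (∀ i j m' n : Fin N,
        ∑ k, ∑ l, R i j k l * M k m' * M l n = ∑ k, ∑ l, M j l * M i k * R k l m' n)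
      ∧ (∀ i j : Fin N, g i j = ∑ k, ∑ l, M j l * M i k * g k l)
      ∧ (∀ m' n : Fin N, ∑ k, ∑ l, gt k l * M k m' * M l n = gt m' n)
      ∧ (∀ i j m' : Fin N, ∑ k, f i j k * M k m' = ∑ k, ∑ l, M j l * M i k * f k l m')
      ∧ (∀ j m' n : Fin N,
          ∑ k, ∑ l, ft j k l * M k m' * M l n = ∑ l, M j l * ft l m' n)
    memG 1
    ∧ (∀ M M' : Matrix (Fin N) (Fin N) ℂ, memG M → memG M' → memG (M * M'))
    ∧ (∀ M : Matrix (Fin N) (Fin N) ℂ, memG M →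
        letI Minv : Matrix (Fin N) (Fin N) ℂ :=
          Matrix.of fun i j => ∑ k, ∑ l, g l i * M k l * gt k j
        M * Minv = 1 ∧ Minv * M = 1 ∧ memG Minv) := by
  set memG : Matrix (Fin N) (Fin N) ℂ → Prop := fun M =>
      (∀ i j m' n : Fin N,
        ∑ k, ∑ l, R i j k l * M k m' * M l n = ∑ k, ∑ l, M j l * M i k * R k l m' n)
      ∧ (∀ i j : Fin N, g i j = ∑ k, ∑ l, M j l * M i k * g k l)
      ∧ (∀ m' n : Fin N, ∑ k, ∑ l, gt k l * M k m' * M l n = gt m' n)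
      ∧ (∀ i j m' : Fin N, ∑ k, f i j k * M k m' = ∑ k, ∑ l, M j l * M i k * f k l m')
      ∧ (∀ j m' n : Fin N,
          ∑ k, ∑ l, ft j k l * M k m' * M l n = ∑ l, M j l * ft l m' n) with hmemG
  set G : Matrix (Fin N) (Fin N) ℂ := Matrix.of g with hG
  set Gt : Matrix (Fin N) (Fin N) ℂ := Matrix.of gt with hGt
  set RM : Matrix (Fin N × Fin N) (Fin N × Fin N) ℂ :=
    Matrix.of (fun p q => R p.1 p.2 q.1 q.2) with hRM
  set F : Matrix (Fin N × Fin N) (Fin N) ℂ := Matrix.of (fun p k => f p.1 p.2 k) with hF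
  set Ft : Matrix (Fin N) (Fin N × Fin N) ℂ := Matrix.of (fun k p => ft k p.1 p.2) with hFt
  -- entry computations
  have E1 : ∀ (M : Matrix (Fin N) (Fin N) ℂ) (i j m' n : Fin N),
      (RM * TT M) (i, j) (m', n) = ∑ k, ∑ l, R i j k l * M k m' * M l n := by
    intro M i j m' n
    rw [Matrix.mul_apply, Fintype.sum_prod_type]
    refine Finset.sum_congr rfl fun k _ => Finset.sum_congr rfl fun l _ => ?_
    simp only [hRM, TT, Matrix.of_apply]; ring
  have E2 : ∀ (M : Matrix (Fin N) (Fin N) ℂ) (i j m' n : Fin N),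
      (TT M * RM) (i, j) (m', n) = ∑ k, ∑ l, M j l * M i k * R k l m' n := by
    intro M i j m' n
    rw [Matrix.mul_apply, Fintype.sum_prod_type]
    refine Finset.sum_congr rfl fun k _ => Finset.sum_congr rfl fun l _ => ?_
    simp only [hRM, TT, Matrix.of_apply]; ring
  have E3 : ∀ (M : Matrix (Fin N) (Fin N) ℂ) (i j : Fin N),
      (M * G * Mᵀ) i j = ∑ k, ∑ l, M j l * M i k * g k l := by
    intro M i j
    simp only [Matrix.mul_apply, Matrix.transpose_apply, Finset.sum_mul]
    rw [Finset.sum_comm]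
    refine Finset.sum_congr rfl fun k _ => Finset.sum_congr rfl fun l _ => ?_
    simp only [hG, Matrix.of_apply]; ring
  have E4 : ∀ (M : Matrix (Fin N) (Fin N) ℂ) (m' n : Fin N),
      (Mᵀ * Gt * M) m' n = ∑ k, ∑ l, gt k l * M k m' * M l n := by
    intro M m' n
    simp only [Matrix.mul_apply, Matrix.transpose_apply, Finset.sum_mul]
    rw [Finset.sum_comm]
    refine Finset.sum_congr rfl fun k _ => Finset.sum_congr rfl fun l _ => ?_
    simp only [hGt, Matrix.of_apply]; ring
  have E5 : ∀ (M : Matrix (Fin N) (Fin N) ℂ) (i j m' : Fin N),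
      (F * M) (i, j) m' = ∑ k, f i j k * M k m' := by
    intro M i j m'
    rw [Matrix.mul_apply]
    exact Finset.sum_congr rfl fun k _ => by simp only [hF, Matrix.of_apply]
  have E6 : ∀ (M : Matrix (Fin N) (Fin N) ℂ) (i j m' : Fin N),
      (TT M * F) (i, j) m' = ∑ k, ∑ l, M j l * M i k * f k l m' := by
    intro M i j m'
    rw [Matrix.mul_apply, Fintype.sum_prod_type]
    refine Finset.sum_congr rfl fun k _ => Finset.sum_congr rfl fun l _ => ?_
    simp only [hF, TT, Matrix.of_apply]; ring
  have E7 : ∀ (M : Matrix (Fin N) (Fin N) ℂ) (j m' n : Fin N),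
      (Ft * TT M) j (m', n) = ∑ k, ∑ l, ft j k l * M k m' * M l n := by
    intro M j m' n
    rw [Matrix.mul_apply, Fintype.sum_prod_type]
    refine Finset.sum_congr rfl fun k _ => Finset.sum_congr rfl fun l _ => ?_
    simp only [hFt, TT, Matrix.of_apply]; ring
  have E8 : ∀ (M : Matrix (Fin N) (Fin N) ℂ) (j m' n : Fin N),
      (M * Ft) j (m', n) = ∑ l, M j l * ft l m' n := by
    intro M j m' n
    rw [Matrix.mul_apply]
    exact Finset.sum_congr rfl fun l _ => by simp only [hFt, Matrix.of_apply]
  -- the key reformulation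
  have key : ∀ M : Matrix (Fin N) (Fin N) ℂ, memG M ↔
      (RM * TT M = TT M * RM ∧ G = M * G * Mᵀ ∧ Mᵀ * Gt * M = Gt
        ∧ F * M = TT M * F ∧ Ft * TT M = M * Ft) := by
    intro M
    simp only [hmemG]
    refine and_congr ?_ (and_congr ?_ (and_congr ?_ (and_congr ?_ ?_)))
    · constructor
      · intro h
        ext p q
        exact (E1 M p.1 p.2 q.1 q.2).trans
          ((h p.1 p.2 q.1 q.2).trans (E2 M p.1 p.2 q.1 q.2).symm)
      · intro h i j m' n
        exact (E1 M i j m' n).symm.trans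
          ((congrFun (congrFun h (i, j)) (m', n)).trans (E2 M i j m' n))
    · constructor
      · intro h
        ext i j
        exact (h i j).trans (E3 M i j).symm
      · intro h i j
        exact (congrFun (congrFun h i) j).trans (E3 M i j)
    · constructor
      · intro h
        ext m' n
        exact (E4 M m' n).trans (h m' n)
      · intro h m' n
        exact (E4 M m' n).symm.trans (congrFun (congrFun h m') n)
    · constructor
      · intro h
        ext p m'
        exact (E5 M p.1 p.2 m').trans ((h p.1 p.2 m').trans (E6 M p.1 p.2 m').symm)
      · intro h i j m'
        exact (E5 M i j m').symm.trans
          ((congrFun (congrFun h (i, j)) m').trans (E6 M i j m'))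
    · constructor
      · intro h
        ext j q
        exact (E7 M j q.1 q.2).trans ((h j q.1 q.2).trans (E8 M j q.1 q.2).symm)
      · intro h j m' n
        exact (E7 M j m' n).symm.trans
          ((congrFun (congrFun h j) (m', n)).trans (E8 M j m' n))
  -- g relations in matrix form
  have hg2 : Gᵀ * Gt = 1 := by
    ext i j
    rw [Matrix.mul_apply, Matrix.one_apply]
    simpa only [hG, hGt, Matrix.transpose_apply, Matrix.of_apply] using (hgs i j).2
  refine ⟨?_, ?_, ?_⟩
  · -- identity
    rw [key]
    refine ⟨?_, ?_, ?_, ?_, ?_⟩ <;> simp [TT_one]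
  · -- products
    intro M M' hM hM'
    rw [key] at hM hM' ⊢
    obtain ⟨a1, a2, a3, a4, a5⟩ := hM
    obtain ⟨b1, b2, b3, b4, b5⟩ := hM'
    refine ⟨?_, ?_, ?_, ?_, ?_⟩
    · rw [TT_mul]
      calc RM * (TT M * TT M') = (RM * TT M) * TT M' := by rw [Matrix.mul_assoc]
        _ = TT M * (RM * TT M') := by rw [a1, Matrix.mul_assoc]
        _ = TT M * (TT M' * RM) := by rw [b1]
        _ = TT M * TT M' * RM := by rw [Matrix.mul_assoc]
    · calc G = M * G * Mᵀ := a2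
        _ = M * (M' * G * M'ᵀ) * Mᵀ := by rw [← b2]
        _ = M * M' * G * (M * M')ᵀ := by
            rw [Matrix.transpose_mul]; simp only [Matrix.mul_assoc]
    · calc (M * M')ᵀ * Gt * (M * M') = M'ᵀ * (Mᵀ * Gt * M) * M' := by
            rw [Matrix.transpose_mul]; simp only [Matrix.mul_assoc]
        _ = M'ᵀ * Gt * M' := by rw [a3]
        _ = Gt := b3
    · rw [TT_mul]
      calc F * (M * M') = (F * M) * M' := by rw [Matrix.mul_assoc]
        _ = TT M * (F * M') := by rw [a4, Matrix.mul_assoc]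
        _ = TT M * (TT M' * F) := by rw [b4]
        _ = TT M * TT M' * F := by rw [Matrix.mul_assoc]
    · rw [TT_mul]
      calc Ft * (TT M * TT M') = (Ft * TT M) * TT M' := by rw [Matrix.mul_assoc]
        _ = M * (Ft * TT M') := by rw [a5, Matrix.mul_assoc]
        _ = M * (M' * Ft) := by rw [b5]
        _ = M * M' * Ft := by rw [Matrix.mul_assoc]
  · -- inverses
    intro M hM
    set Minv : Matrix (Fin N) (Fin N) ℂ :=
      Matrix.of fun i j => ∑ k, ∑ l, g l i * M k l * gt k j with hMinvdef
    rw [key] at hM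
    obtain ⟨a1, a2, a3, a4, a5⟩ := hM
    have hMinv : Minv = Gᵀ * Mᵀ * Gt := by
      ext i j
      simp only [hMinvdef, Matrix.of_apply, Matrix.mul_apply, Matrix.transpose_apply,
        Finset.sum_mul, hG, hGt]
    have a2t : Gᵀ = M * Gᵀ * Mᵀ := by
      calc Gᵀ = (M * G * Mᵀ)ᵀ := by rw [← a2]
        _ = M * Gᵀ * Mᵀ := by
            simp only [Matrix.transpose_mul, Matrix.transpose_transpose, Matrix.mul_assoc]
    have hMr : M * Minv = 1 := by
      rw [hMinv]
      calc M * (Gᵀ * Mᵀ * Gt) = (M * Gᵀ * Mᵀ) * Gt := by simp only [Matrix.mul_assoc]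
        _ = Gᵀ * Gt := by rw [← a2t]
        _ = 1 := hg2
    have hMl : Minv * M = 1 := by
      rw [hMinv]
      calc Gᵀ * Mᵀ * Gt * M = Gᵀ * (Mᵀ * Gt * M) := by simp only [Matrix.mul_assoc]
        _ = Gᵀ * Gt := by rw [a3]
        _ = 1 := hg2
    have hTr : TT M * TT Minv = 1 := by rw [← TT_mul, hMr, TT_one]
    have hTl : TT Minv * TT M = 1 := by rw [← TT_mul, hMl, TT_one]
    have htr1 : Mᵀ * Minvᵀ = 1 := by
      rw [← Matrix.transpose_mul, hMl, Matrix.transpose_one]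
    have htr2 : Minvᵀ * Mᵀ = 1 := by
      rw [← Matrix.transpose_mul, hMr, Matrix.transpose_one]
    refine ⟨hMr, hMl, (key Minv).mpr ⟨?_, ?_, ?_, ?_, ?_⟩⟩
    · exact conj_inv RM (TT M) (TT Minv) (TT M) (TT Minv) a1 hTr hTl
    · calc G = (Minv * M) * G * (Mᵀ * Minvᵀ) := by
            rw [hMl, htr1, Matrix.one_mul, Matrix.mul_one]
        _ = Minv * (M * G * Mᵀ) * Minvᵀ := by simp only [Matrix.mul_assoc]
        _ = Minv * G * Minvᵀ := by rw [← a2]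
    · calc Minvᵀ * Gt * Minv = Minvᵀ * (Mᵀ * Gt * M) * Minv := by rw [a3]
        _ = (Minvᵀ * Mᵀ) * Gt * (M * Minv) := by simp only [Matrix.mul_assoc]
        _ = Gt := by rw [htr2, hMr, Matrix.one_mul, Matrix.mul_one]
    · exact conj_inv F M Minv (TT M) (TT Minv) a4 hMr hTl
    · exact conj_inv Ft (TT M) (TT Minv) M Minv a5 hTr hMl
end

section
/- Let q ∈ ℂ with q ≠ 0, and let K₁, K₂, X₁⁺, X₁⁻, X₂⁺, X₂⁻ be the explicit 7×7 complex matrices defined in the context. Then these matrices satisfy the defining relations of the quantized universal enveloping algebra U_q(g₂) (with Cartan integers a₁₁ = a₂₂ = 2, a₁₂ = −1, a₂₁ = −3 and q₁ = q³, q₂ = q), in denominator-free form: K₁K₂ = K₂K₁; K₁ and K₂ are invertible; K₁X₁^±K₁⁻¹ = q^{±6}X₁^±; K₁X₂^±K₁⁻¹ = q^{∓3}X₂^±; K₂X₁^±K₂⁻¹ = q^{∓3}X₁^±; K₂X₂^±K₂⁻¹ = q^{±2}X₂^±; X₁⁺X₂⁻ = X₂⁻X₁⁺; X₂⁺X₁⁻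 = X₁⁻X₂⁺; (q³−q⁻³)(X₁⁺X₁⁻ − X₁⁻X₁⁺) = K₁ − K₁⁻¹; (q−q⁻¹)(X₂⁺X₂⁻ − X₂⁻X₂⁺) = K₂ − K₂⁻¹; the q-Serre relations (X₁^±)²X₂^± − (q³+q⁻³)X₁^±X₂^±X₁^± + X₂^±(X₁^±)² = 0 and (X₂^±)⁴X₁^± − [4](X₂^±)³X₁^±X₂^± + [4;2](X₂^±)²X₁^±(X₂^±)² − [4]X₂^±X₁^±(X₂^±)³ + X₁^±(X₂^±)⁴ = 0, where [4] := q³+q+q⁻¹+q⁻³ and [4;2] := q⁴+q²+2+q⁻²+q⁻⁴. -/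
/-!
All relations are computations with the matrix units `E a b`, which multiply by
`E a b * E c d = δ b c • E a d`. Conjugating by an invertible diagonal matrix `diagonal d`
rescales `E a b` by `d a / d b`, which gives the `K`-relations. The Serre relations hold term by
term: `X₁^±` squares to zero and `X₁^± X₂^± X₁^± = 0`, while `(X₂^±)³ = 0` and
`(X₂^±)² X₁^± (X₂^±)² = 0`.
-/

open Matrix

section MatrixUnits

variable {n K : Type*} [DecidableEq n] [Fintype n] [Field K]

theorem Matrix.inv_diagonal_of_ne_zero {d : n → K} (hd : ∀ i, d i ≠ 0) :
    (diagonal d)⁻¹ = diagonal d⁻¹ :=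
  inv_eq_right_inv <| by
    rw [diagonal_mul_diagonal, ← diagonal_one]
    exact congrArg diagonal (funext fun i => mul_inv_cancel₀ (hd i))

theorem Matrix.diagonal_mul_single_mul_inv_diagonal {d : n → K} (hd : ∀ i, d i ≠ 0)
    (i j : n) (c : K) :
    diagonal d * single i j c * (diagonal d)⁻¹ = (d i / d j) • single i j c := by
  rw [inv_diagonal_of_ne_zero hd]
  ext a b
  simp only [mul_diagonal, diagonal_mul, smul_apply, single_apply, Pi.inv_apply, smul_eq_mul]
  split_ifs with h
  · rw [h.1, h.2, div_eq_mul_inv]; ring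
  · simp

end MatrixUnits

theorem Matrix.diagonal_eq_sum_smul_single_one {n R : Type*} [DecidableEq n] [Fintype n]
    [Semiring R] (d : n → R) :
    diagonal d = ∑ i, d i • single i i 1 := by
  simp [smul_single, sum_single_eq_diagonal]

section Serre

variable {R A : Type*} [Ring A] [SMulZeroClass R A]

theorem serre_quadratic_eq_zero {x : A} (y : A) (c : R) (hx : x ^ 2 = 0)
    (hxyx : x * y * x = 0) :
    x ^ 2 * y - c • (x * y * x) + y * x ^ 2 = 0 := by
  simp [hx, hxyx]

theorem serre_quartic_eq_zero {x : A} (y : A) (a b : R) (hx : x ^ 3 = 0)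
    (hxyx : x ^ 2 * y * x ^ 2 = 0) :
    x ^ 4 * y - a • (x ^ 3 * y * x) + b • (x ^ 2 * y * x ^ 2) - a • (x * y * x ^ 3)
      + y * x ^ 4 = 0 := by
  have hx4 : x ^ 4 = 0 := by rw [pow_succ, hx, zero_mul]
  simp [hx, hx4, hxyx]

end Serre

namespace G2Rep

section

variable {K : Type*} [Field K] (q : K)

def k₁ : Fin 7 → K := ![1, q ^ 3, (q ^ 3)⁻¹, 1, q ^ 3, (q ^ 3)⁻¹, 1]

def k₂ : Fin 7 → K := ![q, q⁻¹, q ^ 2, 1, (q ^ 2)⁻¹, q, q⁻¹]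

def K₁ : Matrix (Fin 7) (Fin 7) K := diagonal (k₁ q)

def K₂ : Matrix (Fin 7) (Fin 7) K := diagonal (k₂ q)

def X₁p : Matrix (Fin 7) (Fin 7) K := single 1 2 1 + single 4 5 1

def X₁m : Matrix (Fin 7) (Fin 7) K := single 2 1 1 + single 5 4 1

def X₂p : Matrix (Fin 7) (Fin 7) K :=
  single 0 1 1 + (q + q⁻¹) • single 2 3 1 + single 3 4 1 + single 5 6 1

def X₂m : Matrix (Fin 7) (Fin 7) K :=
  single 1 0 1 + single 3 2 1 + (q + q⁻¹) • single 4 3 1 + single 6 5 1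

theorem K₁_mul_K₂_comm : K₁ q * K₂ q = K₂ q * K₁ q :=
  commute_diagonal _ _

theorem X₁p_mul_X₂m_comm : X₁p * X₂m q = X₂m q * X₁p := by
  simp [X₁p, X₂m, mul_add, add_mul]

theorem X₂p_mul_X₁m_comm : X₂p q * X₁m = X₁m * X₂p q := by
  simp [X₁m, X₂p, mul_add, add_mul]

theorem X₁p_sq : (X₁p : Matrix (Fin 7) (Fin 7) K) ^ 2 = 0 := by
  simp [X₁p, sq, mul_add, add_mul]

theorem X₁m_sq : (X₁m : Matrix (Fin 7) (Fin 7) K) ^ 2 = 0 := by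
  simp [X₁m, sq, mul_add, add_mul]

theorem X₁p_mul_X₂p_mul_X₁p : X₁p * X₂p q * X₁p = 0 := by
  simp [X₁p, X₂p, mul_add, add_mul]

theorem X₁m_mul_X₂m_mul_X₁m : X₁m * X₂m q * X₁m = 0 := by
  simp [X₁m, X₂m, mul_add, add_mul]

theorem X₂p_sq : X₂p q ^ 2 = (q + q⁻¹) • single 2 4 1 := by
  simp [X₂p, sq, mul_add, add_mul, -smul_single]

theorem X₂m_sq : X₂m q ^ 2 = (q + q⁻¹) • single 4 2 1 := by
  simp [X₂m, sq, mul_add, add_mul, -smul_single]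

theorem X₂p_pow_three : X₂p q ^ 3 = 0 := by
  rw [pow_succ, X₂p_sq]
  simp [X₂p, mul_add]

theorem X₂m_pow_three : X₂m q ^ 3 = 0 := by
  rw [pow_succ, X₂m_sq]
  simp [X₂m, mul_add]

theorem X₂p_sq_mul_X₁p_mul_X₂p_sq : X₂p q ^ 2 * X₁p * X₂p q ^ 2 = 0 := by
  simp [X₂p_sq, X₁p, mul_add]

theorem X₂m_sq_mul_X₁m_mul_X₂m_sq : X₂m q ^ 2 * X₁m * X₂m q ^ 2 = 0 := by
  simp [X₂m_sq, X₁m, mul_add]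

end

section

variable {K : Type*} [Field K] {q : K}

theorem k₁_ne_zero (hq : q ≠ 0) (i : Fin 7) : k₁ q i ≠ 0 := by
  fin_cases i <;> simp [k₁, hq]

theorem k₂_ne_zero (hq : q ≠ 0) (i : Fin 7) : k₂ q i ≠ 0 := by
  fin_cases i <;> simp [k₂, hq]

theorem isUnit_K₁ (hq : q ≠ 0) : IsUnit (K₁ q) :=
  isUnit_diagonal.2 (Pi.isUnit_iff.2 fun i => (k₁_ne_zero hq i).isUnit)

theorem isUnit_K₂ (hq : q ≠ 0) : IsUnit (K₂ q) :=
  isUnit_diagonal.2 (Pi.isUnit_iff.2 fun i => (k₂_ne_zero hq i).isUnit)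

theorem K₁_conj_X₁p (hq : q ≠ 0) : K₁ q * X₁p * (K₁ q)⁻¹ = q ^ 6 • X₁p := by
  simp only [K₁, X₁p, mul_add, add_mul, diagonal_mul_single_mul_inv_diagonal (k₁_ne_zero hq)]
  simp only [k₁, cons_val, div_inv_eq_mul]
  module

theorem K₁_conj_X₁m (hq : q ≠ 0) : K₁ q * X₁m * (K₁ q)⁻¹ = (q ^ 6)⁻¹ • X₁m := by
  simp only [K₁, X₁m, mul_add, add_mul, diagonal_mul_single_mul_inv_diagonal (k₁_ne_zero hq)]
  simp only [k₁, cons_val]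
  module

theorem K₁_conj_X₂p (hq : q ≠ 0) : K₁ q * X₂p q * (K₁ q)⁻¹ = (q ^ 3)⁻¹ • X₂p q := by
  simp only [K₁, X₂p, mul_add, add_mul, mul_smul_comm, smul_mul_assoc,
    diagonal_mul_single_mul_inv_diagonal (k₁_ne_zero hq)]
  simp only [k₁, cons_val]
  module

theorem K₁_conj_X₂m (hq : q ≠ 0) : K₁ q * X₂m q * (K₁ q)⁻¹ = q ^ 3 • X₂m q := by
  simp only [K₁, X₂m, mul_add, add_mul, mul_smul_comm, smul_mul_assoc,
    diagonal_mul_single_mul_inv_diagonal (k₁_ne_zero hq)]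
  simp only [k₁, cons_val, div_inv_eq_mul]
  module

theorem K₂_conj_X₁p (hq : q ≠ 0) : K₂ q * X₁p * (K₂ q)⁻¹ = (q ^ 3)⁻¹ • X₁p := by
  simp only [K₂, X₁p, mul_add, add_mul, diagonal_mul_single_mul_inv_diagonal (k₂_ne_zero hq)]
  simp only [k₂, cons_val]
  module

theorem K₂_conj_X₁m (hq : q ≠ 0) : K₂ q * X₁m * (K₂ q)⁻¹ = q ^ 3 • X₁m := by
  simp only [K₂, X₁m, mul_add, add_mul, diagonal_mul_single_mul_inv_diagonal (k₂_ne_zero hq)]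
  simp only [k₂, cons_val, div_inv_eq_mul]
  module

theorem K₂_conj_X₂p (hq : q ≠ 0) : K₂ q * X₂p q * (K₂ q)⁻¹ = q ^ 2 • X₂p q := by
  simp only [K₂, X₂p, mul_add, add_mul, mul_smul_comm, smul_mul_assoc,
    diagonal_mul_single_mul_inv_diagonal (k₂_ne_zero hq)]
  simp only [k₂, cons_val, div_inv_eq_mul]
  module

theorem K₂_conj_X₂m (hq : q ≠ 0) : K₂ q * X₂m q * (K₂ q)⁻¹ = (q ^ 2)⁻¹ • X₂m q := by
  simp only [K₂, X₂m, mul_add, add_mul, mul_smul_comm, smul_mul_assoc,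
    diagonal_mul_single_mul_inv_diagonal (k₂_ne_zero hq)]
  simp only [k₂, cons_val]
  module

theorem X₁p_X₁m_commutator (hq : q ≠ 0) :
    (q ^ 3 - (q ^ 3)⁻¹) • (X₁p * X₁m - X₁m * X₁p) = K₁ q - (K₁ q)⁻¹ := by
  rw [K₁, inv_diagonal_of_ne_zero (k₁_ne_zero hq), diagonal_eq_sum_smul_single_one,
    diagonal_eq_sum_smul_single_one]
  simp [X₁p, X₁m, mul_add, add_mul, Fin.sum_univ_seven, k₁, -smul_single]
  module

theorem X₂p_X₂m_commutator (hq : q ≠ 0) :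
    (q - q⁻¹) • (X₂p q * X₂m q - X₂m q * X₂p q) = K₂ q - (K₂ q)⁻¹ := by
  rw [K₂, inv_diagonal_of_ne_zero (k₂_ne_zero hq), diagonal_eq_sum_smul_single_one,
    diagonal_eq_sum_smul_single_one]
  simp [X₂p, X₂m, mul_add, add_mul, Fin.sum_univ_seven, k₂, -smul_single]
  module

end

end G2Rep

/-- the explicit `7×7` matrices of the `7`-dimensional representation satisfy
the defining relations of the quantized universal enveloping algebra `U_q(g₂)`
(with `a₁₂ = −1`, `a₂₁ = −3`, `q₁ = q³`, `q₂ = q`), in denominator-free form. -/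
theorem stmt18 (q : ℂ) (hq : q ≠ 0) :
    letI E : Fin 7 → Fin 7 → Matrix (Fin 7) (Fin 7) ℂ :=
      fun a b => Matrix.single a b 1
    letI K₁ : Matrix (Fin 7) (Fin 7) ℂ :=
      Matrix.diagonal ![1, q ^ 3, (q ^ 3)⁻¹, 1, q ^ 3, (q ^ 3)⁻¹, 1]
    letI K₂ : Matrix (Fin 7) (Fin 7) ℂ :=
      Matrix.diagonal ![q, q⁻¹, q ^ 2, 1, (q ^ 2)⁻¹, q, q⁻¹]
    letI X₁p : Matrix (Fin 7) (Fin 7) ℂ := E 1 2 + E 4 5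
    letI X₁m : Matrix (Fin 7) (Fin 7) ℂ := E 2 1 + E 5 4
    letI X₂p : Matrix (Fin 7) (Fin 7) ℂ :=
      E 0 1 + (q + q⁻¹) • E 2 3 + E 3 4 + E 5 6
    letI X₂m : Matrix (Fin 7) (Fin 7) ℂ :=
      E 1 0 + E 3 2 + (q + q⁻¹) • E 4 3 + E 6 5
    K₁ * K₂ = K₂ * K₁
    ∧ IsUnit K₁ ∧ IsUnit K₂
    ∧ K₁ * X₁p * K₁⁻¹ = (q ^ 6) • X₁p
    ∧ K₁ * X₁m * K₁⁻¹ = (q ^ 6)⁻¹ • X₁m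
    ∧ K₁ * X₂p * K₁⁻¹ = (q ^ 3)⁻¹ • X₂p
    ∧ K₁ * X₂m * K₁⁻¹ = (q ^ 3) • X₂m
    ∧ K₂ * X₁p * K₂⁻¹ = (q ^ 3)⁻¹ • X₁p
    ∧ K₂ * X₁m * K₂⁻¹ = (q ^ 3) • X₁m
    ∧ K₂ * X₂p * K₂⁻¹ = (q ^ 2) • X₂p
    ∧ K₂ * X₂m * K₂⁻¹ = (q ^ 2)⁻¹ • X₂m
    ∧ X₁p * X₂m = X₂m * X₁p
    ∧ X₂p * X₁m = X₁m * X₂p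
    ∧ (q ^ 3 - (q ^ 3)⁻¹) • (X₁p * X₁m - X₁m * X₁p) = K₁ - K₁⁻¹
    ∧ (q - q⁻¹) • (X₂p * X₂m - X₂m * X₂p) = K₂ - K₂⁻¹
    ∧ X₁p ^ 2 * X₂p - (q ^ 3 + (q ^ 3)⁻¹) • (X₁p * X₂p * X₁p) + X₂p * X₁p ^ 2 = 0
    ∧ X₁m ^ 2 * X₂m - (q ^ 3 + (q ^ 3)⁻¹) • (X₁m * X₂m * X₁m) + X₂m * X₁m ^ 2 = 0
    ∧ X₂p ^ 4 * X₁p - (q ^ 3 + q + q⁻¹ + (q ^ 3)⁻¹) • (X₂p ^ 3 * X₁p * X₂p)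
        + (q ^ 4 + q ^ 2 + 2 + (q ^ 2)⁻¹ + (q ^ 4)⁻¹) • (X₂p ^ 2 * X₁p * X₂p ^ 2)
        - (q ^ 3 + q + q⁻¹ + (q ^ 3)⁻¹) • (X₂p * X₁p * X₂p ^ 3) + X₁p * X₂p ^ 4 = 0
    ∧ X₂m ^ 4 * X₁m - (q ^ 3 + q + q⁻¹ + (q ^ 3)⁻¹) • (X₂m ^ 3 * X₁m * X₂m)
        + (q ^ 4 + q ^ 2 + 2 + (q ^ 2)⁻¹ + (q ^ 4)⁻¹) • (X₂m ^ 2 * X₁m * X₂m ^ 2)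
        - (q ^ 3 + q + q⁻¹ + (q ^ 3)⁻¹) • (X₂m * X₁m * X₂m ^ 3) + X₁m * X₂m ^ 4 = 0 := by
  open G2Rep in
  exact ⟨K₁_mul_K₂_comm q, isUnit_K₁ hq, isUnit_K₂ hq,
    K₁_conj_X₁p hq, K₁_conj_X₁m hq, K₁_conj_X₂p hq, K₁_conj_X₂m hq,
    K₂_conj_X₁p hq, K₂_conj_X₁m hq, K₂_conj_X₂p hq, K₂_conj_X₂m hq,
    X₁p_mul_X₂m_comm q, X₂p_mul_X₁m_comm q, X₁p_X₁m_commutator hq, X₂p_X₂m_commutator hq,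
    serre_quadratic_eq_zero _ _ X₁p_sq (X₁p_mul_X₂p_mul_X₁p q),
    serre_quadratic_eq_zero _ _ X₁m_sq (X₁m_mul_X₂m_mul_X₁m q),
    serre_quartic_eq_zero _ _ _ (X₂p_pow_three q) (X₂p_sq_mul_X₁p_mul_X₂p_sq q),
    serre_quartic_eq_zero _ _ _ (X₂m_pow_three q) (X₂m_sq_mul_X₁m_mul_X₂m_sq q)⟩
end
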